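/- arXiv:0708.1730 — 8 statements merged into one kernel-verified Lean document; each statement's English description precedes it below -/
import Mathlib

section
/- Let m ≥ 1. For every set E contained in the upper half-space H = {(t, v) : t > 0, v ∈ ℝ^m}, the conical limit set Λc(E) is a G_{δσ} subset of ℝ^m; that is, there exists a sequence (A_k) of Gδ subsets of ℝ^m with Λc(E) = ⋃_k A_k. -/
/-!
`Λc(E) = ⋃ₖ ⋂ⱼ Uₖⱼ`, where `Uₖⱼ` is the union of the open balls `B(v, min(rⱼ, (k+1) t))` over
the points `(t, v) ∈ E` with `t < rⱼ`, for any positive `rⱼ → 0`. Each `Uₖⱼ` is open. The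
strict inequality defining the balls costs nothing because `t > 0` on `E`, so a cone of
aperture `C` sits inside the open cone of aperture `⌈C⌉ + 1`; conversely, choosing one point
of `E` for each `j` gives the sequence witnessing a conical limit point of aperture `k + 1`.
-/

open Filter Topology

/-- The open upper half-space over a normed space `V`: pairs `(t, v)` with `t > 0`. -/
def upperHalf (V : Type*) [NormedAddCommGroup V] : Set (ℝ × V) := {p | 0 < p.1}

/-- The conical limit set of `E ⊆ ℝ × V`: points `x` for which there are `C > 0` and a
sequence `(t_n, v_n)` in `E` with `t_n → 0`, `v_n → x` and `‖v_n - x‖ ≤ C * t_n`. -/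
def conicalLimitSet {V : Type*} [NormedAddCommGroup V] (E : Set (ℝ × V)) : Set V :=
  {x | ∃ C > 0, ∃ w : ℕ → ℝ × V, (∀ n, w n ∈ E) ∧
    Tendsto (fun n => (w n).1) atTop (𝓝 (0 : ℝ)) ∧
    Tendsto (fun n => (w n).2) atTop (𝓝 x) ∧
    ∀ n, ‖(w n).2 - x‖ ≤ C * (w n).1}

/-- `X ⊆ V` is a conical limit set if it is the conical limit set of some subset of the
upper half-space. -/
def IsConicalLimitSet {V : Type*} [NormedAddCommGroup V] (X : Set V) : Prop :=
  ∃ E ⊆ upperHalf V, conicalLimitSet E = X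

open Metric Set

section ConeShadow

variable {V : Type*} [NormedAddCommGroup V]

def coneShadow (E : Set (ℝ × V)) (C r : ℝ) : Set V :=
  ⋃ p ∈ E, ⋃ (_ : p.1 < r), ball p.2 (min r (C * p.1))

theorem isOpen_coneShadow (E : Set (ℝ × V)) (C r : ℝ) : IsOpen (coneShadow E C r) :=
  isOpen_biUnion fun _ _ => isOpen_iUnion fun _ => isOpen_ball

variable {E : Set (ℝ × V)}

theorem conicalLimitSet_subset_iUnion_iInter_coneShadow (hE : E ⊆ upperHalf V)
    {r : ℕ → ℝ} (hr : ∀ j, 0 < r j) :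
    conicalLimitSet E ⊆ ⋃ k : ℕ, ⋂ j, coneShadow E (k + 1) (r j) := by
  rintro x ⟨C, -, w, hwE, ht, hv, hle⟩
  refine mem_iUnion.2 ⟨⌈C⌉₊, mem_iInter.2 fun j => ?_⟩
  have hdist : Tendsto (fun n => dist (w n).2 x) atTop (𝓝 0) :=
    tendsto_iff_dist_tendsto_zero.1 hv
  obtain ⟨n, htn, hdn⟩ :=
    ((ht.eventually (gt_mem_nhds (hr j))).and (hdist.eventually (gt_mem_nhds (hr j)))).exists
  have hpos : 0 < (w n).1 := hE (hwE n)
  have hcone : dist (w n).2 x < (⌈C⌉₊ + 1) * (w n).1 :=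
    calc dist (w n).2 x = ‖(w n).2 - x‖ := dist_eq_norm _ _
      _ ≤ C * (w n).1 := hle n
      _ < (⌈C⌉₊ + 1) * (w n).1 := by
        gcongr
        exact (Nat.le_ceil C).trans_lt (lt_add_one _)
  simp only [coneShadow, mem_iUnion]
  exact ⟨w n, hwE n, htn, mem_ball'.2 (lt_min hdn hcone)⟩

theorem iInter_coneShadow_subset_conicalLimitSet {C : ℝ} (hC : 0 < C) {r : ℕ → ℝ}
    (hr : Tendsto r atTop (𝓝 0)) : ⋂ j, coneShadow E C (r j) ⊆ conicalLimitSet E := by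
  intro x hx
  simp only [coneShadow, mem_iInter, mem_iUnion, exists_prop] at hx
  choose p hpE hpr hball using hx
  have hdist : ∀ j, dist (p j).2 x < min (r j) (C * (p j).1) := fun j => mem_ball'.1 (hball j)
  -- the ball around `(p j).2` contains `x`, so its radius `C * (p j).1` is positive
  have hpos : ∀ j, 0 < (p j).1 := fun j =>
    pos_of_mul_pos_right (dist_nonneg.trans_lt ((hdist j).trans_le (min_le_right _ _))) hC.le
  refine ⟨C, hC, p, hpE, ?_, ?_, fun j => ?_⟩
  · exact squeeze_zero (fun j => (hpos j).le) (fun j => (hpr j).le) hr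
  · exact tendsto_iff_dist_tendsto_zero.2 <|
      squeeze_zero (fun _ => dist_nonneg) (fun j => ((hdist j).trans_le (min_le_left _ _)).le) hr
  · rw [← dist_eq_norm]
    exact ((hdist j).trans_le (min_le_right _ _)).le

theorem conicalLimitSet_eq_iUnion_iInter_coneShadow (hE : E ⊆ upperHalf V) {r : ℕ → ℝ}
    (hr_pos : ∀ j, 0 < r j) (hr : Tendsto r atTop (𝓝 0)) :
    conicalLimitSet E = ⋃ k : ℕ, ⋂ j, coneShadow E (k + 1) (r j) :=
  (conicalLimitSet_subset_iUnion_iInter_coneShadow hE hr_pos).antisymm <|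
    iUnion_subset fun _ => iInter_coneShadow_subset_conicalLimitSet (by positivity) hr

end ConeShadow

theorem conicalLimitSet_isGdeltaSigma_general (m : ℕ)
    (E : Set (ℝ × EuclideanSpace ℝ (Fin m)))
    (hE : E ⊆ upperHalf (EuclideanSpace ℝ (Fin m))) :
    ∃ A : ℕ → Set (EuclideanSpace ℝ (Fin m)),
      (∀ k, IsGδ (A k)) ∧ conicalLimitSet E = ⋃ k, A k :=
  ⟨fun k => ⋂ j : ℕ, coneShadow E (k + 1) (1 / (j + 1)),
    fun k => .iInter_of_isOpen fun j => isOpen_coneShadow E _ _,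
    conicalLimitSet_eq_iUnion_iInter_coneShadow hE (fun _ => by positivity)
      tendsto_one_div_add_atTop_nhds_zero_nat⟩

/-- For every subset `E` of the upper half-space over `ℝ^m` (`m ≥ 1`), the conical limit
set of `E` is a `G_{δσ}` subset of `ℝ^m`. -/
theorem conicalLimitSet_isGdeltaSigma (m : ℕ) (hm : 1 ≤ m)
    (E : Set (ℝ × EuclideanSpace ℝ (Fin m)))
    (hE : E ⊆ upperHalf (EuclideanSpace ℝ (Fin m))) :
    ∃ A : ℕ → Set (EuclideanSpace ℝ (Fin m)),
      (∀ k, IsGδ (A k)) ∧ conicalLimitSet E = ⋃ k, A k :=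
  conicalLimitSet_isGdeltaSigma_general m E hE
end

section
/- Let m ≥ 1 and let X ⊆ ℝ^m be a conical limit set. If X is countable, then X is nowhere dense in ℝ^m. -/
open Filter Topology

/-- Key step lemma: if the conical limit set of `E` is dense in `ball c' r'`, then
for every point `e` and every `τ > 0` we can find a point `(t, v)` of `E` with `t ≤ τ`,
with `closedBall v (2t)` inside the ball and staying at distance `≥ 2t` from `e`. -/
lemma exists_conical_step {m : ℕ} (hm : 1 ≤ m)
    {E : Set (ℝ × EuclideanSpace ℝ (Fin m))}
    {c' : EuclideanSpace ℝ (Fin m)} {r' : ℝ} (hr' : 0 < r')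
    (hd : Metric.ball c' r' ⊆ closure (conicalLimitSet E))
    (e : EuclideanSpace ℝ (Fin m)) {τ : ℝ} (hτ : 0 < τ) :
    ∃ p : ℝ × EuclideanSpace ℝ (Fin m), p ∈ E ∧ p.1 ≤ τ ∧
      Metric.closedBall p.2 (2 * p.1) ⊆ Metric.ball c' r' ∧ 2 * p.1 ≤ ‖p.2 - e‖ := by
  -- find a point z in ball c' (r'/4) with z ≠ e
  obtain ⟨z, hz, hze⟩ : ∃ z, z ∈ Metric.ball c' (r' / 4) ∧ z ≠ e := by
    by_cases h : c' = e
    · refine ⟨c' + EuclideanSpace.single (⟨0, hm⟩ : Fin m) (r' / 8), ?_, ?_⟩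
      · rw [Metric.mem_ball, dist_eq_norm, add_sub_cancel_left,
          EuclideanSpace.norm_single]
        rw [Real.norm_eq_abs, abs_of_pos (by linarith)]
        linarith
      · rw [← h]
        intro hc
        have : EuclideanSpace.single (⟨0, hm⟩ : Fin m) (r' / 8)
            = (0 : EuclideanSpace ℝ (Fin m)) := by
          have := congrArg (fun w => w - c') hc
          simpa [add_sub_cancel_left] using this
        have hn := congrArg (fun w => ‖w‖) this
        simp only [EuclideanSpace.norm_single, norm_zero, Real.norm_eq_abs] at hn
        rw [abs_of_pos (by linarith)] at hn
        linarith
    · exact ⟨c', Metric.mem_ball_self (by linarith), h⟩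
  -- z is in the closure of the conical limit set; intersect with a small open set
  have hzcl : z ∈ closure (conicalLimitSet E) :=
    hd (Metric.ball_subset_ball (by linarith) hz)
  obtain ⟨x, ⟨hx1, hx2⟩, hxX⟩ :=
    mem_closure_iff.mp hzcl (Metric.ball c' (r' / 4) ∩ {e}ᶜ)
      ((Metric.isOpen_ball).inter isClosed_singleton.isOpen_compl) ⟨hz, hze⟩
  have hxe : (0 : ℝ) < ‖x - e‖ := by
    rw [norm_pos_iff, sub_ne_zero]
    exact hx2
  obtain ⟨C, hC, w, hwE, hwt, hwv, hwcone⟩ := hxX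
  set δ : ℝ := min (r' / 4) ‖x - e‖ with hδdef
  have hδ : 0 < δ := lt_min (by linarith) hxe
  have h1 : ∀ᶠ n in atTop, (w n).1 < min τ (δ / 8) :=
    hwt.eventually_lt_const (lt_min hτ (by linarith))
  have h2 : ∀ᶠ n in atTop, dist ((w n).2) x < δ / 8 :=
    Metric.tendsto_nhds.mp hwv (δ / 8) (by linarith)
  obtain ⟨n, hn1, hn2⟩ := (h1.and h2).exists
  have ht1 : (w n).1 < τ := lt_of_lt_of_le hn1 (min_le_left _ _)
  have ht2 : (w n).1 < δ / 8 := lt_of_lt_of_le hn1 (min_le_right _ _)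
  refine ⟨w n, hwE n, ht1.le, ?_, ?_⟩
  · intro u hu
    rw [Metric.mem_closedBall] at hu
    rw [Metric.mem_ball]
    have hxc : dist x c' < r' / 4 := hx1
    have hux : dist u x ≤ dist u (w n).2 + dist ((w n).2) x := dist_triangle _ _ _
    have hδr : δ ≤ r' / 4 := min_le_left _ _
    calc dist u c' ≤ dist u x + dist x c' := dist_triangle _ _ _
      _ < (2 * (w n).1 + δ / 8) + r' / 4 := by
          have : dist u x < 2 * (w n).1 + δ / 8 := by linarith [hux, hn2, hu]
          linarith
      _ < r' := by linarith
  · have hvx : ‖(w n).2 - x‖ < δ / 8 := by rw [← dist_eq_norm]; exact hn2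
    have hxed : δ ≤ ‖x - e‖ := min_le_right _ _
    have h4 : dist x e ≤ dist x (w n).2 + dist ((w n).2) e := dist_triangle _ _ _
    rw [dist_eq_norm, dist_eq_norm, dist_eq_norm, norm_sub_rev x ((w n).2)] at h4
    linarith

/-- A countable conical limit set in `ℝ^m` (`m ≥ 1`) is nowhere dense. -/
theorem countable_conicalLimitSet_nowhereDense (m : ℕ) (hm : 1 ≤ m)
    (X : Set (EuclideanSpace ℝ (Fin m))) (hX : IsConicalLimitSet X)
    (hc : X.Countable) :
    IsNowhereDense X := by
  obtain ⟨E, hE, hXE⟩ := hX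
  rcases X.eq_empty_or_nonempty with hemp | hne
  · simp [IsNowhereDense, hemp]
  obtain ⟨e, he⟩ := hc.exists_eq_range hne
  rw [IsNowhereDense]
  by_contra h
  obtain ⟨z, hz⟩ := Set.nonempty_iff_ne_empty.mpr h
  obtain ⟨r, hr, hball⟩ := Metric.isOpen_iff.mp isOpen_interior z hz
  have hcl : Metric.ball z r ⊆ closure (conicalLimitSet E) := by
    rw [hXE]; exact hball.trans interior_subset
  have hEpos : ∀ p : ℝ × EuclideanSpace ℝ (Fin m), p ∈ E → 0 < p.1 := fun p hp => hE hp
  -- the invariant along the recursion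
  set Good : (ℝ × EuclideanSpace ℝ (Fin m)) → Prop :=
    fun p => p ∈ E ∧ Metric.ball p.2 (p.1 / 2) ⊆ Metric.ball z r with hGoodDef
  -- initial point
  have hp0 : ∃ p, Good p := by
    obtain ⟨p, hpE, _, hpball, _⟩ := exists_conical_step hm hr hcl (e 0) one_pos
    refine ⟨p, hpE, fun u hu => hpball ?_⟩
    rw [Metric.mem_ball] at hu
    rw [Metric.mem_closedBall]
    have := hEpos p hpE
    linarith
  obtain ⟨p0, hp0good⟩ := hp0
  -- the recursion step
  have hstep : ∀ (k : ℕ) (p : ℝ × EuclideanSpace ℝ (Fin m)), Good p →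
      ∃ q, Good q ∧ (q.1 ≤ p.1 / 4 ∧ dist q.2 p.2 ≤ p.1 / 2 ∧ 2 * q.1 ≤ ‖q.2 - e k‖) := by
    intro k p hp
    have hp1 : 0 < p.1 := hEpos p hp.1
    have hd : Metric.ball p.2 (p.1 / 2) ⊆ closure (conicalLimitSet E) :=
      hp.2.trans hcl
    obtain ⟨q, hqE, hqτ, hqball, hqe⟩ :=
      exists_conical_step hm (half_pos hp1) hd (e k) (by linarith : (0:ℝ) < p.1 / 4)
    have hq1 : 0 < q.1 := hEpos q hqE
    have hqmem : q.2 ∈ Metric.ball p.2 (p.1 / 2) := by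
      apply hqball
      rw [Metric.mem_closedBall, dist_self]
      linarith
    refine ⟨q, ⟨hqE, ?_⟩, hqτ, ?_, hqe⟩
    · intro u hu
      apply hp.2
      apply hqball
      rw [Metric.mem_ball] at hu
      rw [Metric.mem_closedBall]
      linarith
    · rw [Metric.mem_ball] at hqmem
      exact hqmem.le
  -- build the sequence by recursion with choice
  choose! f hf using hstep
  let F : ℕ → ℝ × EuclideanSpace ℝ (Fin m) := fun n => Nat.rec p0 (fun k ih => f k ih) n
  have hFsucc : ∀ k, F (k + 1) = f k (F k) := fun k => rfl
  have hGoodF : ∀ n, Good (F n) := by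
    intro n
    induction n with
    | zero => exact hp0good
    | succ k ih => rw [hFsucc]; exact (hf k (F k) ih).1
  have hrel : ∀ k, (F (k+1)).1 ≤ (F k).1 / 4 ∧ dist (F (k+1)).2 (F k).2 ≤ (F k).1 / 2 ∧
      2 * (F (k+1)).1 ≤ ‖(F (k+1)).2 - e k‖ := by
    intro k
    rw [hFsucc]
    exact (hf k (F k) (hGoodF k)).2
  have tpos : ∀ n, 0 < (F n).1 := fun n => hEpos _ (hGoodF n).1
  -- geometric decay of the scales
  have hgeo : ∀ n j, (F (n + j)).1 ≤ (F n).1 * (1/4 : ℝ) ^ j := by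
    intro n j
    induction j with
    | zero => simp
    | succ j ih =>
        have h1 := (hrel (n + j)).1
        have h2 : (0:ℝ) < (1/4:ℝ) ^ j := by positivity
        calc (F (n + (j+1))).1 = (F ((n + j) + 1)).1 := by ring_nf
          _ ≤ (F (n + j)).1 / 4 := h1
          _ ≤ ((F n).1 * (1/4:ℝ) ^ j) / 4 := by linarith
          _ = (F n).1 * (1/4:ℝ) ^ (j+1) := by ring
  have hdistgeo : ∀ n j, dist ((F (j + n)).2) ((F (j + n + 1)).2) ≤ ((F n).1 / 2) * (1/4:ℝ) ^ j := by
    intro n j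
    have h := (hrel (j + n)).2.1
    rw [dist_comm] at h
    have := hgeo n j
    rw [add_comm n j] at this
    linarith
  -- the sequence of centers is Cauchy
  have hcauchy : CauchySeq (fun n => (F n).2) := by
    apply cauchySeq_of_le_geometric (1/4 : ℝ) ((F 0).1 / 2) (by norm_num)
    intro n
    have := hdistgeo 0 n
    simpa using this
  obtain ⟨y, hy⟩ := cauchySeq_tendsto_of_complete hcauchy
  -- distance to the limit
  have hdistlim : ∀ n, dist ((F n).2) y ≤ (F n).1 := by
    intro n
    have hg : Tendsto (fun j => (F (j + n)).2) atTop (𝓝 y) :=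
      hy.comp (tendsto_add_atTop_nat n)
    have hbnd : ∀ j, dist ((F (j + n)).2) ((F (j + 1 + n)).2) ≤ ((F n).1 / 2) * (1/4:ℝ) ^ j := by
      intro j
      rw [show j + 1 + n = j + n + 1 from by omega]
      exact hdistgeo n j
    have hb := dist_le_of_le_geometric_of_tendsto₀ (1/4 : ℝ) ((F n).1 / 2)
      (by norm_num) hbnd hg
    simp only [Nat.zero_add] at hb
    have h34 : ((F n).1 / 2) / (1 - 1/4 : ℝ) = 2/3 * (F n).1 := by ring
    rw [h34] at hb
    have := tpos n
    linarith
  -- the scales tend to 0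
  have httend : Tendsto (fun n => (F n).1) atTop (𝓝 (0:ℝ)) := by
    apply squeeze_zero (fun n => (tpos n).le) (fun n => by simpa using hgeo 0 n)
    have : Tendsto (fun n : ℕ => (1/4:ℝ) ^ n) atTop (𝓝 0) :=
      tendsto_pow_atTop_nhds_zero_of_lt_one (by norm_num) (by norm_num)
    simpa using this.const_mul ((F 0).1)
  -- y is a conical limit point
  have hymem : y ∈ conicalLimitSet E := by
    refine ⟨1, one_pos, F, fun n => (hGoodF n).1, httend, hy, fun n => ?_⟩
    rw [one_mul, ← dist_eq_norm]
    exact hdistlim n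
  rw [hXE, he] at hymem
  obtain ⟨k, hk⟩ := hymem
  have h1 := (hrel k).2.2
  rw [hk, ← dist_eq_norm] at h1
  have h2 := hdistlim (k + 1)
  have h3 := tpos (k + 1)
  linarith
end

section
/- Let m ≥ 1. Every Gδ subset A of ℝ^m is a conical limit set; that is, there exists a set E contained in the upper half-space H = {(t, v) : t > 0, v ∈ ℝ^m} with Λc(E) = A. -/
open Filter Topology Metric

open Classical in
/-- Auxiliary gauge: a truncated distance to the complement of `U`. -/
noncomputable def ggauge {V : Type*} [NormedAddCommGroup V] (U : Set V) (v : V) : ℝ :=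
  if Uᶜ.Nonempty then min 1 (infDist v Uᶜ) else 1

section gg
variable {V : Type*} [NormedAddCommGroup V] {U W : Set V} {v x : V}

lemma ggauge_nonneg : 0 ≤ ggauge U v := by
  unfold ggauge; split
  · exact le_min zero_le_one infDist_nonneg
  · exact zero_le_one

lemma ggauge_le_one : ggauge U v ≤ 1 := by
  unfold ggauge; split
  · exact min_le_left _ _
  · exact le_rfl

lemma ggauge_pos (hU : IsOpen U) (hv : v ∈ U) : 0 < ggauge U v := by
  unfold ggauge; split
  · rename_i h
    refine lt_min one_pos ?_
    exact (hU.isClosed_compl.notMem_iff_infDist_pos h).mp (by simpa using hv)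
  · exact one_pos

lemma ggauge_le_infDist (h : Uᶜ.Nonempty) : ggauge U v ≤ infDist v Uᶜ := by
  unfold ggauge; rw [if_pos h]; exact min_le_right _ _

lemma ggauge_mono (h : W ⊆ U) : ggauge W v ≤ ggauge U v := by
  unfold ggauge
  by_cases hU : Uᶜ.Nonempty
  · rw [if_pos hU, if_pos (hU.mono (Set.compl_subset_compl.mpr h))]
    exact min_le_min le_rfl (infDist_le_infDist_of_subset (Set.compl_subset_compl.mpr h) hU)
  · rw [if_neg hU]
    split
    · exact min_le_left _ _
    · exact le_rfl

lemma ggauge_sub_dist (x v : V) : ggauge U x - dist v x ≤ ggauge U v := by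
  unfold ggauge
  split
  · have h1 : infDist x Uᶜ ≤ infDist v Uᶜ + dist v x := by
      rw [dist_comm]; exact infDist_le_infDist_add_dist
    rcases le_total (infDist v Uᶜ) 1 with h | h
    · have h2 : min 1 (infDist x Uᶜ) ≤ infDist x Uᶜ := min_le_right _ _
      rw [min_eq_right h]; linarith
    · rw [min_eq_left h]
      have h2 : min 1 (infDist x Uᶜ) ≤ 1 := min_le_left _ _
      linarith [dist_nonneg (x := v) (y := x)]
  · linarith [dist_nonneg (x := v) (y := x)]
end gg

/-- Every `G_δ` subset of `ℝ^m` (`m ≥ 1`) is a conical limit set. -/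
theorem isGdelta_isConicalLimitSet (m : ℕ) (hm : 1 ≤ m)
    (A : Set (EuclideanSpace ℝ (Fin m))) (hA : IsGδ A) :
    ∃ E ⊆ upperHalf (EuclideanSpace ℝ (Fin m)), conicalLimitSet E = A := by
  classical
  obtain ⟨U, hUopen, hAeq⟩ := hA.eq_iInter_nat
  set V : ℕ → Set (EuclideanSpace ℝ (Fin m)) := fun n => ⋂ k ∈ Finset.range (n+1), U k with hVdef
  have hVopen : ∀ n, IsOpen (V n) := fun n =>
    isOpen_biInter_finset (fun k _ => hUopen k)
  have hVanti : ∀ {j n : ℕ}, j ≤ n → V n ⊆ V j := by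
    intro j n hjn v hv
    simp only [hVdef, Set.mem_iInter, Finset.mem_range] at hv ⊢
    intro k hk
    exact hv k (lt_of_lt_of_le hk (by omega))
  have hAV : A = ⋂ n, V n := by
    rw [hAeq]
    ext v
    simp only [Set.mem_iInter, hVdef, Finset.mem_range]
    constructor
    · intro h n k _; exact h k
    · intro h k; exact h k k (by omega)
  -- the gauge and time functions
  set tf : ℕ → EuclideanSpace ℝ (Fin m) → ℝ :=
    fun n v => min (1/(n+1 : ℝ)) (ggauge (V n) v ^ 2) with htf
  have htfpos : ∀ n v, v ∈ V n → 0 < tf n v := fun n v hv =>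
    lt_min (by positivity) (pow_pos (ggauge_pos (hVopen n) hv) 2)
  set E : Set (ℝ × EuclideanSpace ℝ (Fin m)) :=
    {p | ∃ n, p.2 ∈ V n ∧ p.1 = tf n p.2} with hE
  refine ⟨E, ?_, ?_⟩
  · rintro ⟨t, v⟩ ⟨n, hv, ht⟩
    show (0:ℝ) < t
    have : t = tf n v := ht
    rw [this]; exact htfpos n v hv
  ext x
  constructor
  · rintro ⟨C, hC, w, hwE, hwt, hwv, hwb⟩
    rw [hAV, Set.mem_iInter]
    by_contra hx
    push_neg at hx
    have hex : ∃ j, x ∉ V j := hx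
    set j := Nat.find hex with hj
    have hxj : x ∉ V j := Nat.find_spec hex
    have hxlt : ∀ n < j, x ∈ V n := fun n hn => not_not.mp (Nat.find_min hex hn)
    choose nn hmem heq using hwE
    have hd : Tendsto (fun k => dist ((w k).2) x) atTop (𝓝 0) :=
      tendsto_iff_dist_tendsto_zero.mp hwv
    -- Claim: if j ≤ nn k then 1 ≤ C * dist (w k).2 x
    have claim : ∀ k, j ≤ nn k → 1 ≤ C * dist ((w k).2) x := by
      intro k hjk
      set v := (w k).2 with hv
      have hne : (V j)ᶜ.Nonempty := ⟨x, hxj⟩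
      set d' := infDist v (V j)ᶜ with hd'
      have hvVj : v ∈ V j := hVanti hjk (hmem k)
      have hd'pos : 0 < d' :=
        ((hVopen j).isClosed_compl.notMem_iff_infDist_pos hne).mp (by simpa using hvVj)
      have h1 : d' ≤ dist v x := infDist_le_dist_of_mem hxj
      have hgle : ggauge (V (nn k)) v ≤ d' :=
        le_trans (ggauge_mono (hVanti hjk)) (ggauge_le_infDist hne)
      have h2 : (w k).1 ≤ d' ^ 2 := by
        rw [heq k]
        refine le_trans (min_le_right _ _) ?_
        exact pow_le_pow_left₀ ggauge_nonneg hgle 2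
      have hb := hwb k
      rw [← dist_eq_norm] at hb
      have h3 : d' ≤ C * d' ^ 2 := by
        calc d' ≤ dist v x := h1
          _ ≤ C * (w k).1 := hb
          _ ≤ C * d' ^ 2 := by nlinarith
      have h4 : 1 ≤ C * d' := by nlinarith
      calc (1:ℝ) ≤ C * d' := h4
        _ ≤ C * dist v x := by nlinarith
    rcases Nat.eq_zero_or_pos j with hj0 | hjpos
    · have hev : ∀ᶠ k in atTop, C * dist ((w k).2) x < 1 := by
        have : Tendsto (fun k => C * dist ((w k).2) x) atTop (𝓝 (C * 0)) := hd.const_mul C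
        rw [mul_zero] at this
        exact this.eventually_lt_const one_pos
      obtain ⟨k, hk⟩ := hev.exists
      exact absurd (claim k (by omega)) (not_le.mpr hk)
    · set ε := ggauge (V (j-1)) x with hε
      have hεpos : 0 < ε := ggauge_pos (hVopen _) (hxlt _ (by omega))
      have hεle : ∀ n, n < j → ε ≤ ggauge (V n) x := fun n hn =>
        ggauge_mono (hVanti (by omega))
      set δ := min (1/(j:ℝ)) ((ε/2) ^ 2) with hδ
      have hδpos : 0 < δ := lt_min (by positivity) (by positivity)
      have hev1 : ∀ᶠ k in atTop, (w k).1 < δ := hwt.eventually_lt_const hδpos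
      have hev2 : ∀ᶠ k in atTop, dist ((w k).2) x < min (1/C) (ε/2) :=
        hd.eventually_lt_const (lt_min (by positivity) (by positivity))
      obtain ⟨k, hk1, hk2⟩ := (hev1.and hev2).exists
      have hkC : dist ((w k).2) x < 1/C := lt_of_lt_of_le hk2 (min_le_left _ _)
      have hkε : dist ((w k).2) x < ε/2 := lt_of_lt_of_le hk2 (min_le_right _ _)
      have hnk : nn k < j := by
        by_contra h
        have := claim k (by omega)
        have : (1:ℝ)/C < 1/C := by
          calc (1:ℝ)/C ≤ dist ((w k).2) x := by
                rw [div_le_iff₀ hC] at *; linarith [this]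
            _ < 1/C := hkC
        exact lt_irrefl _ this
      -- lower bound on t_k
      have hg1 : ε/2 ≤ ggauge (V (nn k)) ((w k).2) := by
        have := ggauge_sub_dist (U := V (nn k)) x ((w k).2)
        have h2 := hεle (nn k) hnk
        linarith
      have hlow : δ ≤ (w k).1 := by
        rw [heq k]
        refine le_min ?_ ?_
        · refine le_trans (min_le_left _ _) ?_
          apply one_div_le_one_div_of_le (by positivity)
          have : (nn k : ℝ) + 1 ≤ j := by exact_mod_cast by omega
          linarith
        · refine le_trans (min_le_right _ _) ?_
          exact pow_le_pow_left₀ (by positivity) hg1 2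
      exact absurd hk1 (not_lt.mpr hlow)
  · intro hxA
    have hxV : ∀ n, x ∈ V n := by
      rw [hAV] at hxA; exact Set.mem_iInter.mp hxA
    refine ⟨1, one_pos, fun n => (tf n x, x), fun n => ⟨n, hxV n, rfl⟩, ?_, tendsto_const_nhds, ?_⟩
    · apply squeeze_zero (fun n => (htfpos n x (hxV n)).le) (fun n => min_le_left _ _)
      exact tendsto_one_div_add_atTop_nhds_zero_nat
    · intro n
      simp only [sub_self, norm_zero, one_mul]
      exact (htfpos n x (hxV n)).le
end

section
/- There exists a countable set A ⊆ ℝ such that A is a conical limit set (of some subset of the upper half-plane {(t, v) : t > 0, v ∈ ℝ}) but A is not a Gδ subset of ℝ. (For example, the set of endpoints of the complementary intervals of the middle-thirds Cantor set has this property.) -/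
open Filter Topology

/-!
Take `A = {∑_{i ∈ F} 3⁻ⁱ : F ⊆ ℕ finite}`. Adding a tiny term `3⁻ⁿ` shows that no point of `A`
is isolated, so the countable set `A` is not `G_δ` by the Baire category theorem. After scaling
by `3 ^ max F`, points of `A` are integers plus at most `1/2`, so `a = ∑_{i ∈ F} 3⁻ⁱ` has the
gap `(a - 3^{-max F}/2, a)` free of `A` on its left.

To realise `A`, attach to each `a ∈ A` a short segment `{(t, a - K_a t) : 0 < t ≤ δ_a}`, with
distinct natural slopes `K_a`. Then `a` is a conical limit along its segment. Conversely, a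
sequence converging to `x` in a cone of aperture `C` either meets segments of slope `≤ C`
infinitely often (there are finitely many, so one of them is met infinitely often and `x` is its
endpoint), or eventually stays on steeper segments; then `x` lies in the left gap of their
endpoints, which forces these endpoints to be eventually equal.
-/

open Set

theorem not_isGδ_of_countable_of_preperfect {X : Type*} [TopologicalSpace X] [T2Space X]
    [LocallyCompactSpace X] {A : Set X} (hc : A.Countable) (hp : Preperfect A)
    (hne : A.Nonempty) : ¬IsGδ A := by
  intro hG
  have := hG.baireSpace_of_t2Space_locallyCompactSpace
  have := hc.to_subtype
  have := hne.to_subtype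
  obtain ⟨a, b, hb⟩ := nonempty_interior_of_iUnion_of_closed (f := fun a : A => ({a} : Set A))
    (fun _ => isClosed_singleton) (iUnion_of_singleton A)
  obtain rfl : b = a := mem_singleton_iff.mp (interior_subset hb)
  obtain ⟨u, hu, hua⟩ := (mem_nhds_subtype A b _).mp (mem_interior_iff_mem_nhds.mp hb)
  obtain ⟨y, ⟨hyu, hyA⟩, hyb⟩ := preperfect_iff_nhds.mp hp b b.2 u hu
  exact hyb (congrArg Subtype.val (hua (show (⟨y, hyA⟩ : A) ∈ Subtype.val ⁻¹' u from hyu)))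

noncomputable def ternaryVal (F : Finset ℕ) : ℝ := ∑ i ∈ F, (3 : ℝ)⁻¹ ^ i

lemma three_pow_mul_ternaryVal (m : ℕ) (F : Finset ℕ) :
    3 ^ m * ternaryVal F =
      ((∑ i ∈ F with i ≤ m, 3 ^ (m - i) : ℕ) : ℝ) + 3 ^ m * ternaryVal {i ∈ F | m < i} := by
  rw [ternaryVal, ← F.sum_filter_add_sum_filter_not (· ≤ m), mul_add, Finset.mul_sum]
  push_cast
  congr 1
  · refine Finset.sum_congr rfl fun i hi => ?_
    rw [pow_sub₀ _ (by norm_num) (Finset.mem_filter.mp hi).2, inv_pow]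
  · simp only [ternaryVal, not_le]

lemma three_pow_mul_ternaryVal_le_half {m : ℕ} {S : Finset ℕ} (hS : ∀ i ∈ S, m < i) :
    3 ^ m * ternaryVal S ≤ 1 / 2 := by
  have hsub : S ⊆ Finset.Ico (m + 1) (S.sup id + 1) := fun i hi =>
    Finset.mem_Ico.mpr ⟨hS i hi, Nat.lt_succ_of_le (Finset.le_sup (f := id) hi)⟩
  calc 3 ^ m * ternaryVal S
      ≤ 3 ^ m * ∑ i ∈ Finset.Ico (m + 1) (S.sup id + 1), (3 : ℝ)⁻¹ ^ i := by
        gcongr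
        exact Finset.sum_le_sum_of_subset_of_nonneg hsub fun _ _ _ => by positivity
    _ ≤ 3 ^ m * ((3 : ℝ)⁻¹ ^ (m + 1) / (1 - 3⁻¹)) := by
        gcongr
        exact geom_sum_Ico_le_of_lt_one (by norm_num) (by norm_num)
    _ = 1 / 2 := by
        rw [pow_succ, inv_pow]
        field_simp
        norm_num

lemma exists_nat_le_three_pow_mul_ternaryVal (m : ℕ) (F : Finset ℕ) :
    ∃ N : ℕ, (N : ℝ) ≤ 3 ^ m * ternaryVal F ∧ 3 ^ m * ternaryVal F ≤ N + 1 / 2 := by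
  have htail := three_pow_mul_ternaryVal_le_half (S := {i ∈ F | m < i}) (m := m)
    fun i hi => (Finset.mem_filter.mp hi).2
  have hpos : 0 ≤ 3 ^ m * ternaryVal {i ∈ F | m < i} := by unfold ternaryVal; positivity
  rw [three_pow_mul_ternaryVal]
  exact ⟨_, by linarith, by linarith⟩

lemma exists_nat_eq_three_pow_mul_ternaryVal {m : ℕ} {F : Finset ℕ} (hF : ∀ i ∈ F, i ≤ m) :
    ∃ N : ℕ, 3 ^ m * ternaryVal F = N := by
  have hempty : {i ∈ F | m < i} = ∅ :=
    Finset.filter_eq_empty_iff.mpr fun i hi => not_lt.mpr (hF i hi)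
  rw [three_pow_mul_ternaryVal, hempty, ternaryVal, Finset.sum_empty, mul_zero, add_zero]
  exact ⟨_, rfl⟩

theorem ternaryVal_add_le_of_lt {m : ℕ} {F G : Finset ℕ} (hF : ∀ i ∈ F, i ≤ m)
    (h : ternaryVal G < ternaryVal F) : ternaryVal G + (3 : ℝ)⁻¹ ^ m / 2 ≤ ternaryVal F := by
  obtain ⟨N, hN⟩ := exists_nat_eq_three_pow_mul_ternaryVal hF
  obtain ⟨M, hM, hM'⟩ := exists_nat_le_three_pow_mul_ternaryVal m G
  have h3 : (0 : ℝ) < 3 ^ m := by positivity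
  have hMN : M + 1 ≤ N := by
    have : (M : ℝ) < N := hN ▸ hM.trans_lt (mul_lt_mul_of_pos_left h h3)
    exact_mod_cast this
  have hscaled : 3 ^ m * (ternaryVal G + (3 : ℝ)⁻¹ ^ m / 2) ≤ 3 ^ m * ternaryVal F := by
    have : (M : ℝ) + 1 ≤ N := by exact_mod_cast hMN
    rw [mul_add, inv_pow, mul_div_assoc', mul_inv_cancel₀ h3.ne']
    linarith
  exact le_of_mul_le_mul_left hscaled h3

theorem exists_leftGap_ternaryVal (F : Finset ℕ) :
    ∃ r > 0, ∀ b ∈ range ternaryVal, b ∉ Ioo (ternaryVal F - r) (ternaryVal F) := by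
  refine ⟨(3 : ℝ)⁻¹ ^ F.sup id / 2, by positivity, ?_⟩
  rintro _ ⟨G, rfl⟩ ⟨hlow, hlt⟩
  have := ternaryVal_add_le_of_lt (fun i hi => Finset.le_sup (f := id) hi) hlt
  linarith

theorem preperfect_range_ternaryVal : Preperfect (range ternaryVal) := by
  rintro _ ⟨F, rfl⟩
  have hinsert : ∀ᶠ n in atTop, ternaryVal (insert n F) = ternaryVal F + (3 : ℝ)⁻¹ ^ n := by
    filter_upwards [Nat.cofinite_eq_atTop ▸ F.eventually_cofinite_notMem] with n hn
    rw [ternaryVal, Finset.sum_insert hn, add_comm, ternaryVal]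
  have hlim : Tendsto (fun n => ternaryVal F + (3 : ℝ)⁻¹ ^ n) atTop (𝓝 (ternaryVal F)) := by
    simpa using tendsto_const_nhds.add
      (tendsto_pow_atTop_nhds_zero_of_lt_one (r := (3 : ℝ)⁻¹) (by norm_num) (by norm_num))
  rw [accPt_iff_frequently]
  refine hlim.frequently (Eventually.frequently ?_)
  filter_upwards [hinsert] with n hn
  exact ⟨by simp, insert n F, hn⟩

section SlopedSegments

variable {A : Set ℝ} {K δ : ℝ → ℝ}

variable (A K δ) in
def slopedSegments : Set (ℝ × ℝ) :=
  ⋃ a ∈ A, {p | p.1 ∈ Ioc 0 (δ a) ∧ p.2 = a - K a * p.1}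

lemma mem_slopedSegments {p : ℝ × ℝ} :
    p ∈ slopedSegments A K δ ↔ ∃ a ∈ A, p.1 ∈ Ioc 0 (δ a) ∧ p.2 = a - K a * p.1 := by
  simp only [slopedSegments, mem_iUnion₂, mem_ofPred_eq, exists_prop]

lemma slopedSegments_subset_upperHalf : slopedSegments A K δ ⊆ upperHalf ℝ := fun _ hp => by
  obtain ⟨_, _, ht, _⟩ := mem_slopedSegments.mp hp
  exact ht.1

lemma subset_conicalLimitSet_slopedSegments (hK : ∀ a ∈ A, 0 < K a) (hδ : ∀ a ∈ A, 0 < δ a) :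
    A ⊆ conicalLimitSet (slopedSegments A K δ) := by
  intro a ha
  have ht : Tendsto (fun n : ℕ => δ a * 2⁻¹ ^ n) atTop (𝓝 0) := by
    simpa using (tendsto_pow_atTop_nhds_zero_of_lt_one (r := (2 : ℝ)⁻¹) (by norm_num)
      (by norm_num)).const_mul (δ a)
  have htpos : ∀ n : ℕ, 0 < δ a * 2⁻¹ ^ n := fun n => mul_pos (hδ a ha) (by positivity)
  refine ⟨K a, hK a ha, fun n => (δ a * 2⁻¹ ^ n, a - K a * (δ a * 2⁻¹ ^ n)),
    fun n => mem_slopedSegments.mpr ⟨a, ha, ⟨htpos n, ?_⟩, rfl⟩, ht, ?_, fun n => ?_⟩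
  · exact mul_le_of_le_one_right (hδ a ha).le (pow_le_one₀ (by norm_num) (by norm_num))
  · simpa using tendsto_const_nhds.sub (ht.const_mul (K a))
  · rw [sub_sub_cancel_left, norm_neg, Real.norm_eq_abs, abs_of_pos (mul_pos (hK a ha) (htpos n))]

lemma eq_of_mem_leftGap {r : ℝ → ℝ} (hgap : ∀ a ∈ A, ∀ b ∈ A, b ∉ Ioo (a - r a) a)
    {a b x : ℝ} (ha : a ∈ A) (hb : b ∈ A) (hxa : x ∈ Ioo (a - r a) a)
    (hxb : x ∈ Ioo (b - r b) b) : a = b := by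
  rcases lt_trichotomy a b with h | h | h
  · exact absurd ⟨by linarith [hxb.1, hxa.2], h⟩ (hgap b hb a ha)
  · exact h
  · exact absurd ⟨by linarith [hxa.1, hxb.2], h⟩ (hgap a ha b hb)

lemma conicalLimitSet_slopedSegments_subset (hfin : ∀ C, {a ∈ A | K a ≤ C}.Finite)
    (hgap : ∀ a ∈ A, ∀ b ∈ A, b ∉ Ioo (a - 2 * K a * δ a) a) :
    conicalLimitSet (slopedSegments A K δ) ⊆ A := by
  rintro x ⟨C, hC, w, hwE, ht, hv, hcone⟩
  choose a haA hta hva using fun n => mem_slopedSegments.mp (hwE n)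
  have eq_of_frequently : ∀ b, (∃ᶠ n in atTop, a n = b) → x = b := fun b hb =>
    tendsto_nhds_unique_of_frequently_eq hv (g := fun n => b - K b * (w n).1)
      (by simpa using tendsto_const_nhds.sub (ht.const_mul (K b)))
      (hb.mono fun n hn => by rw [hva n, hn])
  suffices ∃ b ∈ A, ∃ᶠ n in atTop, a n = b by
    obtain ⟨b, hb, hfreq⟩ := this
    exact eq_of_frequently b hfreq ▸ hb
  by_cases hsteep : ∀ᶠ n in atTop, C < K (a n)
  · have hleft : ∀ᶠ n in atTop, x ∈ Ioo (a n - 2 * K (a n) * δ (a n)) (a n) := by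
      filter_upwards [hsteep] with n hn
      have hcone' : |a n - K (a n) * (w n).1 - x| ≤ C * (w n).1 := by
        rw [← hva n, ← Real.norm_eq_abs]
        exact hcone n
      obtain ⟨ht₀, htδ⟩ := hta n
      constructor <;> nlinarith [abs_le.mp hcone']
    obtain ⟨N, hN⟩ := eventually_atTop.mp hleft
    refine ⟨a N, haA N, Eventually.frequently (eventually_atTop.mpr ⟨N, fun n hn => ?_⟩)⟩
    exact eq_of_mem_leftGap hgap (haA n) (haA N) (hN n hn) (hN N le_rfl)
  · have hfreq : ∃ᶠ n in atTop, ∃ b ∈ {b ∈ A | K b ≤ C}, a n = b :=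
      (not_eventually.mp hsteep).mono fun n hn => ⟨a n, ⟨haA n, not_lt.mp hn⟩, rfl⟩
    obtain ⟨b, hb, hfreq⟩ := (hfin C).frequently_exists.mp hfreq
    exact ⟨b, hb.1, hfreq⟩

end SlopedSegments

theorem isConicalLimitSet_of_countable_of_leftGap {A : Set ℝ} (hc : A.Countable)
    (hgap : ∀ a ∈ A, ∃ r > 0, ∀ b ∈ A, b ∉ Ioo (a - r) a) : IsConicalLimitSet A := by
  obtain ⟨f, hf⟩ := countable_iff_exists_injOn.mp hc
  choose! r hr hrgap using hgap
  set K : ℝ → ℝ := fun a => f a + 1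
  have hK : ∀ a, 0 < K a := fun a => by positivity
  refine ⟨slopedSegments A K fun a => r a / (2 * K a), slopedSegments_subset_upperHalf,
    subset_antisymm (conicalLimitSet_slopedSegments_subset (fun C => ?_) fun a ha => ?_)
      (subset_conicalLimitSet_slopedSegments (fun a _ => hK a)
        fun a ha => div_pos (hr a ha) (by linarith [hK a]))⟩
  · refine Finite.of_finite_image ((finite_Iic ⌊C⌋₊).subset ?_) (hf.mono (sep_subset _ _))
    rintro _ ⟨a, ⟨-, haC⟩, rfl⟩
    exact Nat.le_floor (by linarith [show K a = f a + 1 from rfl])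
  · rw [mul_div_cancel₀ _ (by linarith [hK a])]
    exact hrgap a ha

/-- There is a countable subset of `ℝ` which is a conical limit set but not a `G_δ` set. -/
theorem exists_countable_conicalLimitSet_not_Gdelta :
    ∃ A : Set ℝ, A.Countable ∧ IsConicalLimitSet A ∧ ¬ IsGδ A :=
  ⟨range ternaryVal, countable_range _,
    isConicalLimitSet_of_countable_of_leftGap (countable_range _) (by
      rintro _ ⟨F, rfl⟩
      exact exists_leftGap_ternaryVal F),
    not_isGδ_of_countable_of_preperfect (countable_range _) preperfect_range_ternaryVal
      (range_nonempty _)⟩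
end

section
/- Let m ≥ 2 and identify ℝ^m with ℝ^{m−1} × ℝ. If A ⊆ ℝ^{m−1} is a G_{δσ} set, then A × {0} ⊆ ℝ^m is a conical limit set; that is, there exists a subset E of the upper half-space over ℝ^m whose conical limit set equals {(a, 0) : a ∈ A}. -/
/-!
A Gδ set `⋂ n, U n` (with `U n` open and decreasing) is the conical limit set of the union of the
graphs `t = min (2⁻¹ ^ n) (dist (a, (U n)ᶜ) ^ 2)` over `U n`. A single graph reaches height `0`
only on the boundary of `U n`, and a cone of aperture `C` at a point outside `U n` meets the `n`-th
graph only at heights `≥ C⁻¹ ^ 2`; so a conical approach must climb through infinitely many graphs,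
which is possible only at points of every `U n`.

For a countable union of Gδ sets `B k`, the set built for `B k` is tilted into one more dimension
with slope `k`, `(t, a) ↦ (t, (a, k * t))`. A cone of aperture `C` only sees the slopes `k ≤ C`,
and closures commute with finite unions, so every conical limit point comes from a single `B k`.
-/

open Filter Topology

open Set Metric WithLp
open scoped ENNReal

section Cone

variable {V : Type*} [NormedAddCommGroup V]

def coneAt (C : ℝ) (x : V) : Set (ℝ × V) := {p | ‖p.2 - x‖ ≤ C * p.1}

lemma nonneg_of_mem_coneAt {C : ℝ} {x : V} {p : ℝ × V} (hC : 0 < C) (hp : p ∈ coneAt C x) :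
    0 ≤ p.1 :=
  nonneg_of_mul_nonneg_right ((norm_nonneg _).trans hp) hC

lemma mem_conicalLimitSet_iff {E : Set (ℝ × V)} {x : V} :
    x ∈ conicalLimitSet E ↔ ∃ C > 0, ((0 : ℝ), x) ∈ closure (E ∩ coneAt C x) := by
  refine exists_congr fun C => and_congr_right fun _ => ⟨?_, fun h => ?_⟩
  · rintro ⟨w, hwE, ht, hv, hcone⟩
    exact mem_closure_of_tendsto (ht.prodMk_nhds hv) (.of_forall fun n => ⟨hwE n, hcone n⟩)
  · obtain ⟨w, hw, hlim⟩ := mem_closure_iff_seq_limit.1 h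
    exact ⟨w, fun n => (hw n).1, hlim.fst_nhds, hlim.snd_nhds, fun n => (hw n).2⟩

end Cone

section Gauge

variable {X : Type*} [MetricSpace X]

open scoped Classical in
/-- `infDist a Uᶜ`, except that it is `1` when `U = univ`, where `infDist` to the empty set
would be the junk value `0`. -/
noncomputable def distCompl (U : Set X) (a : X) : ℝ :=
  if (Uᶜ).Nonempty then infDist a Uᶜ else 1

@[fun_prop]
lemma continuous_distCompl (U : Set X) : Continuous (distCompl U) := by
  unfold distCompl
  split_ifs
  exacts [continuous_infDist_pt _, continuous_const]

lemma distCompl_pos {U : Set X} (hU : IsOpen U) {a : X} (ha : a ∈ U) : 0 < distCompl U a := by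
  unfold distCompl
  split_ifs with h
  exacts [(hU.isClosed_compl.notMem_iff_infDist_pos h).1 (notMem_compl_iff.2 ha), one_pos]

lemma distCompl_le_dist {U : Set X} {x : X} (hx : x ∉ U) (a : X) : distCompl U a ≤ dist a x := by
  rw [distCompl, if_pos ⟨x, hx⟩]
  exact infDist_le_dist_of_mem hx

end Gauge

section GDelta

variable {V : Type*} [NormedAddCommGroup V]

def gaugeGraph (U : Set V) (h : ℝ) : Set (ℝ × V) :=
  {p | p.2 ∈ U ∧ p.1 = min h (distCompl U p.2 ^ 2)}

lemma gaugeGraph_subset_upperHalf {U : Set V} (hU : IsOpen U) {h : ℝ} (hh : 0 < h) :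
    gaugeGraph U h ⊆ upperHalf V := by
  rintro p ⟨ha, ht⟩
  have := distCompl_pos hU ha
  show 0 < p.1
  rw [ht]
  exact lt_min hh (by positivity)

lemma gaugeGraph_inter_coneAt_subset {U : Set V} (hU : IsOpen U) {h C : ℝ} (hC : 0 < C) {x : V}
    (hx : x ∉ U) : gaugeGraph U h ∩ coneAt C x ⊆ {p | C⁻¹ ^ 2 ≤ p.1} := by
  rintro ⟨t, a⟩ ⟨⟨ha, ht⟩, hcone⟩
  obtain rfl : t = min h (distCompl U a ^ 2) := ht
  set d := distCompl U a
  have hd : 0 < d := distCompl_pos hU ha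
  have hdt : d ≤ C * min h (d ^ 2) := by
    have : dist a x ≤ C * min h (d ^ 2) := (dist_eq_norm a x).trans_le hcone
    exact (distCompl_le_dist hx a).trans this
  have hCd : C⁻¹ ≤ d := by
    rw [inv_le_iff_one_le_mul₀' hC]
    nlinarith [min_le_right h (d ^ 2)]
  show C⁻¹ ^ 2 ≤ min h (d ^ 2)
  calc C⁻¹ ^ 2 = C⁻¹ * C⁻¹ := sq _
    _ ≤ C⁻¹ * (C * min h (d ^ 2)) := by gcongr; exact hCd.trans hdt
    _ = min h (d ^ 2) := inv_mul_cancel_left₀ hC.ne' _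

lemma notMem_closure_gaugeGraph_inter_coneAt {U : Set V} (hU : IsOpen U) {h C : ℝ} (hh : 0 < h)
    (hC : 0 < C) (x : V) : ((0 : ℝ), x) ∉ closure (gaugeGraph U h ∩ coneAt C x) := by
  intro hx0
  have hgraph : ((0 : ℝ), x) ∈ {p : ℝ × V | p.1 = min h (distCompl U p.2 ^ 2)} :=
    closure_minimal (fun p hp => hp.1.2)
      (isClosed_eq continuous_fst (by fun_prop)) hx0
  have hxU : x ∉ U := fun hxU => by
    have := distCompl_pos hU hxU
    exact (lt_min hh (pow_pos this 2)).ne' hgraph.symm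
  have : C⁻¹ ^ 2 ≤ 0 := closure_minimal (gaugeGraph_inter_coneAt_subset hU hC hxU)
    (isClosed_le continuous_const continuous_fst) hx0
  exact this.not_gt (by positivity)

lemma conicalLimitSet_iUnion_gaugeGraph {U : ℕ → Set V} (hU : ∀ n, IsOpen (U n))
    (hanti : Antitone U) : conicalLimitSet (⋃ n, gaugeGraph (U n) (2⁻¹ ^ n)) = ⋂ n, U n := by
  ext x
  rw [mem_conicalLimitSet_iff, mem_iInter]
  constructor
  · rintro ⟨C, hC, hx⟩ N
    by_contra hxN
    have hsub : (⋃ n, gaugeGraph (U n) (2⁻¹ ^ n)) ∩ coneAt C x ⊆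
        (⋃ n < N, gaugeGraph (U n) (2⁻¹ ^ n) ∩ coneAt C x) ∪ {p | C⁻¹ ^ 2 ≤ p.1} := by
      rintro p ⟨hp, hpc⟩
      obtain ⟨n, hn⟩ := mem_iUnion.1 hp
      rcases lt_or_ge n N with hnN | hNn
      · exact Or.inl (mem_biUnion hnN ⟨hn, hpc⟩)
      · exact Or.inr (gaugeGraph_inter_coneAt_subset (hU n) hC (fun h => hxN (hanti hNn h))
          ⟨hn, hpc⟩)
    have := closure_mono hsub hx
    rw [closure_union, closure_iUnion₂_lt_nat,
      (isClosed_le continuous_const continuous_fst).closure_eq] at this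
    rcases this with hlow | hhigh
    · obtain ⟨n, -, hn⟩ := mem_iUnion₂.1 hlow
      exact notMem_closure_gaugeGraph_inter_coneAt (hU n) (by positivity) hC x hn
    · exact (show (0 : ℝ) < C⁻¹ ^ 2 by positivity).not_ge hhigh
  · intro hx
    refine ⟨1, one_pos, mem_closure_of_tendsto (b := atTop)
      (f := fun n : ℕ => (min (2⁻¹ ^ n) (distCompl (U n) x ^ 2), x)) ?_ (.of_forall fun n => ?_)⟩
    · refine Tendsto.prodMk_nhds ?_ tendsto_const_nhds
      refine squeeze_zero (fun n => ?_) (fun n => min_le_left _ _)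
        (tendsto_pow_atTop_nhds_zero_of_lt_one (by norm_num) (by norm_num))
      exact le_min (by positivity) (by positivity)
    · refine ⟨mem_iUnion.2 ⟨n, hx n, rfl⟩, ?_⟩
      simp only [coneAt, mem_ofPred_eq, sub_self, norm_zero, one_mul]
      exact le_min (by positivity) (by positivity)

theorem IsGδ.isConicalLimitSet {G : Set V} (hG : IsGδ G) : IsConicalLimitSet G := by
  obtain ⟨U, hU, rfl⟩ := hG.eq_iInter_nat
  have hopen (n : ℕ) : IsOpen (dissipate U n) :=
    (finite_le_nat n).isOpen_biInter fun i _ => hU i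
  refine ⟨⋃ n, gaugeGraph (dissipate U n) (2⁻¹ ^ n),
    iUnion_subset fun n => gaugeGraph_subset_upperHalf (hopen n) (by positivity), ?_⟩
  rw [conicalLimitSet_iUnion_gaugeGraph hopen antitone_dissipate, iInter_dissipate]

end GDelta

section Slope

variable {V : Type*} [NormedAddCommGroup V] {p : ℝ≥0∞} [Fact (1 ≤ p)]

lemma WithLp.norm_toLp_prod_le {W : Type*} [SeminormedAddCommGroup W] (u : V) (w : W) :
    ‖toLp p (u, w)‖ ≤ ‖u‖ + ‖w‖ := by
  have : toLp p (u, w) = toLp p (u, (0 : W)) + toLp p ((0 : V), w) := by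
    rw [← toLp_add, Prod.mk_add_mk, add_zero, zero_add]
  rw [this, ← norm_toLp_fst p V W u, ← norm_toLp_snd p V W w]
  exact norm_add_le _ _

lemma mul_le_sqrt_of_sq_mul_le_one {k t : ℝ} (hk : 0 ≤ k) (ht : 0 ≤ t) (hcap : k ^ 2 * t ≤ 1) :
    k * t ≤ √t :=
  (Real.le_sqrt (by positivity) ht).2 (by nlinarith)

variable (p) in
/-- The cap `k ^ 2 * t ≤ 1` gives `k * t ≤ √t`, which forces the extra coordinate of every conical
limit point to vanish. -/
def slopeLift (E : ℕ → Set (ℝ × V)) : Set (ℝ × WithLp p (V × ℝ)) :=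
  ⋃ k : ℕ, (fun q => (q.1, toLp p (q.2, (k : ℝ) * q.1))) '' {q ∈ E k | (k : ℝ) ^ 2 * q.1 ≤ 1}

lemma slopeLift_subset_upperHalf {E : ℕ → Set (ℝ × V)} (hE : ∀ k, E k ⊆ upperHalf V) :
    slopeLift p E ⊆ upperHalf (WithLp p (V × ℝ)) :=
  iUnion_subset fun k => by
    rintro _ ⟨q, hq, rfl⟩
    exact hE k hq.1

lemma toLp_image_conicalLimitSet_subset_slopeLift (E : ℕ → Set (ℝ × V)) (k : ℕ) :
    (fun x => toLp p (x, (0 : ℝ))) '' conicalLimitSet (E k) ⊆ conicalLimitSet (slopeLift p E) := by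
  rintro _ ⟨x, hx, rfl⟩
  obtain ⟨C, hC, hx⟩ := mem_conicalLimitSet_iff.1 hx
  refine mem_conicalLimitSet_iff.2 ⟨C + k, by positivity, ?_⟩
  have hxcap : ((0 : ℝ), x) ∈ closure ({q : ℝ × V | (k : ℝ) ^ 2 * q.1 < 1} ∩ (E k ∩ coneAt C x)) :=
    (isOpen_lt (by fun_prop) continuous_const).inter_closure ⟨by simp, hx⟩
  have := map_mem_closure (f := fun q : ℝ × V => (q.1, toLp p (q.2, (k : ℝ) * q.1)))
    (t := slopeLift p E ∩ coneAt (C + k) (toLp p (x, 0))) (by fun_prop) hxcap ?_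
  · simpa using this
  rintro ⟨t, a⟩ ⟨hcap, hE, hcone⟩
  refine ⟨mem_iUnion.2 ⟨k, (t, a), ⟨hE, hcap.le⟩, rfl⟩, ?_⟩
  have ht : 0 ≤ t := nonneg_of_mem_coneAt hC hcone
  have hcone : ‖a - x‖ ≤ C * t := hcone
  show ‖toLp p (a, (k : ℝ) * t) - toLp p (x, 0)‖ ≤ (C + k) * t
  calc ‖toLp p (a, (k : ℝ) * t) - toLp p (x, 0)‖ = ‖toLp p (a - x, (k : ℝ) * t)‖ := by
        rw [← toLp_sub, Prod.mk_sub_mk, sub_zero]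
    _ ≤ ‖a - x‖ + ‖(k : ℝ) * t‖ := WithLp.norm_toLp_prod_le _ _
    _ ≤ (C + k) * t := by rw [Real.norm_of_nonneg (by positivity)]; linarith

lemma conicalLimitSet_slopeLift_subset {E : ℕ → Set (ℝ × V)} (hE : ∀ k, E k ⊆ upperHalf V) :
    conicalLimitSet (slopeLift p E) ⊆
      ⋃ k, (fun x => toLp p (x, (0 : ℝ))) '' conicalLimitSet (E k) := by
  rintro ⟨x, s⟩ hξ
  obtain ⟨C, hC, hξ⟩ := mem_conicalLimitSet_iff.1 hξ
  have hpiece : ∀ q ∈ slopeLift p E ∩ coneAt C (toLp p (x, s)), ∃ k : ℕ, ∃ t a,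
      q = (t, toLp p (a, (k : ℝ) * t)) ∧ (t, a) ∈ E k ∧ 0 < t ∧ (k : ℝ) ^ 2 * t ≤ 1 ∧
      ‖a - x‖ ≤ C * t ∧ ‖(k : ℝ) * t - s‖ ≤ C * t := by
    rintro _ ⟨hq, hcone⟩
    obtain ⟨k, ⟨t, a⟩, ⟨hE', hcap⟩, rfl⟩ := mem_iUnion.1 hq
    have hcone : ‖toLp p (a - x, (k : ℝ) * t - s)‖ ≤ C * t := by
      simpa [coneAt, ← toLp_sub] using hcone
    exact ⟨k, t, a, rfl, hE', hE k hE', hcap, (WithLp.norm_fst_le V _).trans hcone,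
      (WithLp.norm_snd_le V _).trans hcone⟩
  obtain rfl : s = 0 := by
    have hbound : slopeLift p E ∩ coneAt C (toLp p (x, s)) ⊆ {q | ‖s‖ ≤ C * q.1 + √q.1} := by
      intro q hq
      obtain ⟨k, t, a, rfl, -, ht, hcap, -, hs⟩ := hpiece q hq
      have := mul_le_sqrt_of_sq_mul_le_one k.cast_nonneg ht.le hcap
      have := norm_sub_norm_le s ((k : ℝ) * t)
      rw [norm_sub_rev s, Real.norm_of_nonneg (by positivity : (0 : ℝ) ≤ k * t)] at this
      show ‖s‖ ≤ C * t + √t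
      linarith
    have := closure_minimal hbound (isClosed_le continuous_const (by fun_prop)) hξ
    simpa using this
  have hsub : slopeLift p E ∩ coneAt C (toLp p (x, 0)) ⊆
      ⋃ k ≤ ⌊C⌋₊, (fun q => (q.1, toLp p (q.2, (k : ℝ) * q.1))) '' (E k ∩ coneAt C x) := by
    intro q hq
    obtain ⟨k, t, a, rfl, hE', ht, -, ha, hk⟩ := hpiece q hq
    rw [sub_zero, Real.norm_of_nonneg (by positivity)] at hk
    exact mem_biUnion (Nat.le_floor (le_of_mul_le_mul_right hk ht)) ⟨(t, a), ⟨hE', ha⟩, rfl⟩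
  have := closure_mono hsub hξ
  rw [closure_iUnion₂_le_nat] at this
  obtain ⟨k, -, hk⟩ := mem_iUnion₂.1 this
  refine mem_iUnion.2 ⟨k, x, mem_conicalLimitSet_iff.2 ⟨C, hC, ?_⟩, rfl⟩
  have := map_mem_closure (f := fun q : ℝ × WithLp p (V × ℝ) => (q.1, q.2.fst))
    (t := E k ∩ coneAt C x) (by fun_prop) hk (by rintro _ ⟨q, hq, rfl⟩; exact hq)
  simpa using this

lemma conicalLimitSet_slopeLift {E : ℕ → Set (ℝ × V)} (hE : ∀ k, E k ⊆ upperHalf V) :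
    conicalLimitSet (slopeLift p E) =
      ⋃ k, (fun x => toLp p (x, (0 : ℝ))) '' conicalLimitSet (E k) :=
  (conicalLimitSet_slopeLift_subset hE).antisymm
    (iUnion_subset (toLp_image_conicalLimitSet_subset_slopeLift E))

end Slope

theorem Gdeltasigma_in_hyperplane_isConicalLimitSet_general (m : ℕ)
    (A : Set (EuclideanSpace ℝ (Fin (m - 1))))
    (hA : ∃ B : ℕ → Set (EuclideanSpace ℝ (Fin (m - 1))),
      (∀ k, IsGδ (B k)) ∧ A = ⋃ k, B k) :
    ∃ E ⊆ upperHalf (WithLp 2 (EuclideanSpace ℝ (Fin (m - 1)) × ℝ)),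
      conicalLimitSet E =
        (fun a => (WithLp.equiv 2 (EuclideanSpace ℝ (Fin (m - 1)) × ℝ)).symm
          (a, (0 : ℝ))) '' A := by
  obtain ⟨B, hB, rfl⟩ := hA
  choose E hEup hE using fun k => (hB k).isConicalLimitSet
  refine ⟨slopeLift 2 E, slopeLift_subset_upperHalf hEup, ?_⟩
  rw [conicalLimitSet_slopeLift hEup, image_iUnion]
  simp only [hE, WithLp.equiv_symm_apply]

/-- For `m ≥ 2`, identifying `ℝ^m` with the Euclidean (`L²`) product `ℝ^(m-1) × ℝ`:
every `G_{δσ}` subset `A` of `ℝ^(m-1)`, viewed inside the hyperplane `ℝ^(m-1) × {0}`,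
is a conical limit set. -/
theorem Gdeltasigma_in_hyperplane_isConicalLimitSet (m : ℕ) (hm : 2 ≤ m)
    (A : Set (EuclideanSpace ℝ (Fin (m - 1))))
    (hA : ∃ B : ℕ → Set (EuclideanSpace ℝ (Fin (m - 1))),
      (∀ k, IsGδ (B k)) ∧ A = ⋃ k, B k) :
    ∃ E ⊆ upperHalf (WithLp 2 (EuclideanSpace ℝ (Fin (m - 1)) × ℝ)),
      conicalLimitSet E =
        (fun a => (WithLp.equiv 2 (EuclideanSpace ℝ (Fin (m - 1)) × ℝ)).symm
          (a, (0 : ℝ))) '' A :=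
  Gdeltasigma_in_hyperplane_isConicalLimitSet_general m A hA
end

section
/- For every m ≥ 1 there exist a homeomorphism h : ℝ^m → ℝ^m and a countable set A ⊆ ℝ^m such that A is not a conical limit set but h(A) is a conical limit set. In particular, the class of conical limit sets is not invariant under homeomorphisms. -/
open Filter Topology

/-!
Say that `P` is nonporous at `a` if points near `a` are much closer to `P` than to `a`. If `A` is
countable without isolated points and `closure A` is nonporous at every point of `A`, then `A` is
not a conical limit set: the cones of any `E` with `Λc(E) ⊇ A` sweep out open sets dense in
`closure A`, so by Baire category some point of `closure A \ A` lies in all of them. Conversely,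
if in one coordinate each point of a countable set `B` is approached by gaps of some `K ⊆ ℝ` of
length comparable to their distance, then `B` is a conical limit set: put witnesses for `b` inside
these gaps, at a relative depth tending to zero along an enumeration of `B`; a cone of bounded
aperture around a deep witness stays inside its gap, which rules out spurious limit points.

The points with eventually alternating digits of a Cantor set whose relative gap lengths tend to
zero are of the first kind in every coordinate, all points of the middle-thirds Cantor set are of
the second kind, and the homeomorphism of the line matching the two Cantor sets digit by digit
carries the one to the other.
-/

open Set Metric

section ConicalLimitSets

variable {V : Type*} [NormedAddCommGroup V]

theorem conicalLimitSet_mono {E F : Set (ℝ × V)} (h : E ⊆ F) :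
    conicalLimitSet E ⊆ conicalLimitSet F := by
  rintro x ⟨C, hC, w, hwE, hw⟩
  exact ⟨C, hC, w, fun n => h (hwE n), hw⟩

theorem mem_conicalLimitSet_iff_s5 {E : Set (ℝ × V)} (hE : E ⊆ upperHalf V) {x : V} :
    x ∈ conicalLimitSet E ↔ ∃ C > 0, ∀ δ > 0, ∃ q ∈ E, q.1 < δ ∧ ‖q.2 - x‖ ≤ C * q.1 := by
  constructor
  · rintro ⟨C, hC, w, hwE, ht, -, hcone⟩
    refine ⟨C, hC, fun δ hδ => ?_⟩
    obtain ⟨n, hn⟩ := (ht.eventually (gt_mem_nhds hδ)).exists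
    exact ⟨w n, hwE n, hn, hcone n⟩
  · rintro ⟨C, hC, h⟩
    choose w hwE hwt hwx using fun n : ℕ => h (1 / (n + 1)) Nat.one_div_pos_of_nat
    have ht : Tendsto (fun n => (w n).1) atTop (𝓝 0) :=
      squeeze_zero (fun n => (hE (hwE n)).le) (fun n => (hwt n).le)
        tendsto_one_div_add_atTop_nhds_zero_nat
    refine ⟨C, hC, w, hwE, ht, ?_, hwx⟩
    rw [tendsto_iff_norm_sub_tendsto_zero]
    exact squeeze_zero (fun n => norm_nonneg _) hwx (by simpa using ht.const_mul C)

end ConicalLimitSets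

section Porosity

/-- `P` has porosity zero at `a`. -/
def IsNonporousAt {X : Type*} [PseudoMetricSpace X] (P : Set X) (a : X) : Prop :=
  ∀ ε > 0, ∀ᶠ v in 𝓝 a, ∃ p ∈ P, dist v p ≤ ε * dist v a

theorem IsNonporousAt.mono {X : Type*} [PseudoMetricSpace X] {P Q : Set X} {a : X}
    (h : IsNonporousAt P a) (hPQ : P ⊆ Q) : IsNonporousAt Q a :=
  fun ε hε => (h ε hε).mono fun _ ⟨p, hp, hd⟩ => ⟨p, hPQ hp, hd⟩

variable {V : Type*} [NormedAddCommGroup V]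

theorem IsNonporousAt.exists_near_conical_witness {E : Set (ℝ × V)} (hE : E ⊆ upperHalf V)
    {P : Set V} {a : V} (hP : IsNonporousAt P a) (ha : a ∈ conicalLimitSet E)
    {δ r : ℝ} (hδ : 0 < δ) (hr : 0 < r) :
    ∃ q ∈ E, q.1 < δ ∧ ∃ p ∈ P, dist p q.2 < q.1 ∧ dist p a < r := by
  obtain ⟨C, hC, hw⟩ := (mem_conicalLimitSet_iff_s5 hE).1 ha
  obtain ⟨ρ, hρ, hball⟩ := Metric.eventually_nhds_iff.1 (hP (1 / (2 * C)) (by positivity))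
  obtain ⟨q, hqE, hqδ, hqa⟩ := hw (min δ (min (ρ / C) (r / (C + 1)))) (by positivity)
  have ht : 0 < q.1 := hE hqE
  have hqa : dist q.2 a ≤ C * q.1 := by rwa [dist_eq_norm]
  have htρ : C * q.1 < ρ := by
    have := (hqδ.trans_le ((min_le_right _ _).trans (min_le_left _ _)))
    rwa [lt_div_iff₀ hC, mul_comm] at this
  have htr : (C + 1) * q.1 < r := by
    have := (hqδ.trans_le ((min_le_right _ _).trans (min_le_right _ _)))
    rwa [lt_div_iff₀ (by positivity), mul_comm] at this
  obtain ⟨p, hp, hpq⟩ := hball (hqa.trans_lt htρ)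
  have hpq : dist p q.2 ≤ q.1 / 2 := by
    rw [dist_comm]
    calc dist q.2 p ≤ 1 / (2 * C) * dist q.2 a := hpq
      _ ≤ 1 / (2 * C) * (C * q.1) := by gcongr
      _ = q.1 / 2 := by field_simp
  refine ⟨q, hqE, hqδ.trans_le (min_le_left _ _), p, hp, by linarith, ?_⟩
  calc dist p a ≤ dist p q.2 + dist q.2 a := dist_triangle _ _ _
    _ < r := by nlinarith

theorem preimage_cones_mem_residual {E : Set (ℝ × V)} (hE : E ⊆ upperHalf V) {A : Set V}
    (hAE : A ⊆ conicalLimitSet E) (hnp : ∀ a ∈ A, IsNonporousAt (closure A) a) {δ : ℝ}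
    (hδ : 0 < δ) :
    (Subtype.val ⁻¹' ⋃ q ∈ {q ∈ E | q.1 < δ}, ball q.2 q.1 : Set (closure A)) ∈
      residual (closure A) := by
  refine residual_of_dense_open
    ((isOpen_biUnion fun _ _ => isOpen_ball).preimage continuous_subtype_val) ?_
  refine Metric.dense_iff.2 fun z r hr => ?_
  obtain ⟨a, ha, hza⟩ := Metric.mem_closure_iff.1 z.2 (r / 2) (by positivity)
  obtain ⟨q, hqE, hqδ, p, hp, hpq, hpa⟩ :=
    (hnp a ha).exists_near_conical_witness hE (hAE ha) hδ (half_pos hr)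
  refine ⟨⟨p, hp⟩, ?_, mem_biUnion (x := q) ⟨hqE, hqδ⟩ hpq⟩
  rw [mem_ball, Subtype.dist_eq]
  linarith [dist_triangle p a z, dist_comm a (z : V)]

theorem setOf_ne_mem_residual {X : Type*} [MetricSpace X] {A : Set X} (hA : Preperfect A)
    {a : X} (ha : a ∈ A) : {p : closure A | (p : X) ≠ a} ∈ residual (closure A) := by
  refine residual_of_dense_open
    (isClosed_singleton.preimage continuous_subtype_val).isOpen_compl ?_
  refine Metric.dense_iff.2 fun z r hr => ?_
  by_cases hz : (z : X) = a
  · obtain ⟨y, ⟨hyr, hyA⟩, hya⟩ := accPt_iff_nhds.1 (hA a ha) (ball a r) (ball_mem_nhds _ hr)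
    exact ⟨⟨y, subset_closure hyA⟩, by rwa [mem_ball, Subtype.dist_eq, hz], hya⟩
  · exact ⟨z, mem_ball_self hr, hz⟩

/-- Baire category in `closure A`: the open sets swept out by the cones of `E` are dense there,
so some point of `closure A \ A` lies in all of them and is a conical limit point. -/
theorem not_isConicalLimitSet_of_isNonporousAt [CompleteSpace V] {A : Set V}
    (hA : A.Countable) (hne : A.Nonempty) (hperf : Preperfect A)
    (hnp : ∀ a ∈ A, IsNonporousAt (closure A) a) : ¬ IsConicalLimitSet A := by
  rintro ⟨E, hE, hEA⟩
  have : Countable A := hA.to_subtype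
  have : Nonempty (closure A) := ⟨⟨_, subset_closure hne.some_mem⟩⟩
  have : IsClosed (closure A) := isClosed_closure
  have : CompleteSpace (closure A) := IsClosed.completeSpace_coe
  obtain ⟨x, hxU, hxA⟩ := (dense_of_mem_residual (inter_mem
    (countable_iInter_mem.2 fun n : ℕ =>
      preimage_cones_mem_residual hE hEA.symm.subset hnp (Nat.one_div_pos_of_nat (n := n)))
    (countable_iInter_mem.2 fun a : A => setOf_ne_mem_residual hperf a.2))).nonempty
  have hx : (x : V) ∈ conicalLimitSet E := by
    refine (mem_conicalLimitSet_iff_s5 hE).2 ⟨1, one_pos, fun δ hδ => ?_⟩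
    obtain ⟨n, hn⟩ := exists_nat_one_div_lt hδ
    obtain ⟨q, ⟨hqE, hqn⟩, hxq⟩ := mem_iUnion₂.1 (mem_iInter.1 hxU n)
    refine ⟨q, hqE, hqn.trans hn, ?_⟩
    rw [one_mul, ← dist_eq_norm, dist_comm]
    exact (mem_ball.1 hxq).le
  exact mem_iInter.1 hxA ⟨x, hEA ▸ hx⟩ rfl

end Porosity

section Gaps

def IsConicalGapPoint (K : Set ℝ) (y : ℝ) : Prop :=
  ∃ C, ∀ δ > 0, ∃ a ∈ K, ∃ c ∈ K, a < c ∧ c - a < δ ∧ Disjoint (Ioo a c) K ∧ |y - a| ≤ C * (c - a)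

theorem eq_of_mem_gaps {K : Set ℝ} {a c a' c' y : ℝ} (ha : a ∈ K) (hc : c ∈ K) (ha' : a' ∈ K)
    (hc' : c' ∈ K) (hK : Disjoint (Ioo a c) K) (hK' : Disjoint (Ioo a' c') K)
    (hy : y ∈ Ioo a c) (hy' : y ∈ Ioo a' c') : a = a' ∧ c = c' := by
  obtain ⟨h1, h2⟩ := hy
  obtain ⟨h1', h2'⟩ := hy'
  constructor
  · by_contra hne
    rcases lt_or_gt_of_ne hne with h | h
    · exact disjoint_left.1 hK ⟨h, by linarith⟩ ha'
    · exact disjoint_left.1 hK' ⟨h, by linarith⟩ ha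
  · by_contra hne
    rcases lt_or_gt_of_ne hne with h | h
    · exact disjoint_left.1 hK' ⟨by linarith, h⟩ hc
    · exact disjoint_left.1 hK ⟨by linarith, h⟩ hc'

/-- The gap of `K` containing `y` is unique, so `y` has a fixed positive relative depth in it. -/
theorem not_forall_exists_shallow_gap (K : Set ℝ) (y : ℝ) :
    ¬ ∀ η > 0, ∃ a ∈ K, ∃ c ∈ K, Disjoint (Ioo a c) K ∧ y ∈ Ioo a c ∧ y - a < η * (c - a) := by
  intro h
  obtain ⟨a, ha, c, hc, hK, hy, -⟩ := h 1 one_pos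
  have hac : 0 < c - a := by linarith [hy.1, hy.2]
  obtain ⟨a', ha', c', hc', hK', hy', hdepth⟩ := h ((y - a) / (c - a)) (by have := hy.1; positivity)
  obtain ⟨rfl, rfl⟩ := eq_of_mem_gaps ha hc ha' hc' hK hK' hy hy'
  rw [div_mul_cancel₀ _ hac.ne'] at hdepth
  exact lt_irrefl _ hdepth

variable {V : Type*} [NormedAddCommGroup V] [NormedSpace ℝ V]

def gapWitnesses (K : Set ℝ) (ℓ : V →L[ℝ] ℝ) (u : V) (C θ : ℝ) (b : V) : Set (ℝ × V) :=
  {q | ∃ a ∈ K, ∃ c ∈ K, a < c ∧ Disjoint (Ioo a c) K ∧ |ℓ b - a| ≤ C * (c - a) ∧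
    q = (θ ^ 2 * (c - a), b + (a + θ * (c - a) - ℓ b) • u)}

variable {K : Set ℝ} {ℓ : V →L[ℝ] ℝ} {u : V} {C θ : ℝ} {b : V}

theorem gapWitnesses_subset_upperHalf (hθ : 0 < θ) :
    gapWitnesses K ℓ u C θ b ⊆ upperHalf V := by
  rintro _ ⟨a, -, c, -, hac, -, -, rfl⟩
  show 0 < θ ^ 2 * (c - a)
  have : 0 < c - a := by linarith
  positivity

theorem norm_sub_le_of_mem_gapWitnesses (hθ : 0 < θ) {q : ℝ × V}
    (hq : q ∈ gapWitnesses K ℓ u C θ b) : ‖q.2 - b‖ ≤ (C + θ) * ‖u‖ / θ ^ 2 * q.1 := by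
  obtain ⟨a, -, c, -, hac, -, hb, rfl⟩ := hq
  have hca : 0 < c - a := by linarith
  calc ‖b + (a + θ * (c - a) - ℓ b) • u - b‖ = |a - ℓ b + θ * (c - a)| * ‖u‖ := by
        rw [add_sub_cancel_left, norm_smul, Real.norm_eq_abs]; ring_nf
    _ ≤ (C + θ) * (c - a) * ‖u‖ := by
        gcongr
        calc |a - ℓ b + θ * (c - a)| ≤ |a - ℓ b| + |θ * (c - a)| := abs_add_le _ _
          _ = |ℓ b - a| + θ * (c - a) := by
              rw [abs_of_pos (by positivity : 0 < θ * (c - a)), abs_sub_comm]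
          _ ≤ (C + θ) * (c - a) := by linarith
    _ = (C + θ) * ‖u‖ / θ ^ 2 * (θ ^ 2 * (c - a)) := by field_simp

theorem mem_conicalLimitSet_gapWitnesses (hθ : 0 < θ) (hθ1 : θ ≤ 1)
    (hb : ∀ δ > 0, ∃ a ∈ K, ∃ c ∈ K, a < c ∧ c - a < δ ∧ Disjoint (Ioo a c) K ∧
      |ℓ b - a| ≤ C * (c - a)) :
    b ∈ conicalLimitSet (gapWitnesses K ℓ u C θ b) := by
  refine (mem_conicalLimitSet_iff_s5 (gapWitnesses_subset_upperHalf hθ)).2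
    ⟨(|C| + θ) * ‖u‖ / θ ^ 2 + 1, by positivity, fun δ hδ => ?_⟩
  obtain ⟨a, ha, c, hc, hac, hδ', hK, hbac⟩ := hb δ hδ
  have hq : ((θ ^ 2 * (c - a), b + (a + θ * (c - a) - ℓ b) • u) : ℝ × V) ∈
      gapWitnesses K ℓ u C θ b := ⟨a, ha, c, hc, hac, hK, hbac, rfl⟩
  have ht : 0 < θ ^ 2 * (c - a) := (gapWitnesses_subset_upperHalf hθ) hq
  refine ⟨_, hq, ?_, (norm_sub_le_of_mem_gapWitnesses hθ hq).trans
    (mul_le_mul_of_nonneg_right ?_ ht.le)⟩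
  · calc θ ^ 2 * (c - a) ≤ 1 * (c - a) := by gcongr; nlinarith
      _ < δ := by linarith
  · have : (C + θ) * ‖u‖ / θ ^ 2 ≤ (|C| + θ) * ‖u‖ / θ ^ 2 := by
      gcongr
      exact le_abs_self C
    linarith

theorem exists_gap_of_mem_gapWitnesses (hu : ℓ u = 1) {q : ℝ × V}
    (hq : q ∈ gapWitnesses K ℓ u C θ b) {x : V} {κ : ℝ} (hqx : ‖q.2 - x‖ ≤ κ * q.1)
    (hθ : 0 ≤ θ) (hκ : ‖ℓ‖ * κ * θ ≤ 1 / 2) :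
    ∃ a ∈ K, ∃ c ∈ K, a < c ∧ Disjoint (Ioo a c) K ∧
      |ℓ x - (a + θ * (c - a))| ≤ θ * (c - a) / 2 := by
  obtain ⟨a, ha, c, hc, hac, hK, -, rfl⟩ := hq
  refine ⟨a, ha, c, hc, hac, hK, ?_⟩
  have hg : 0 ≤ θ * (c - a) := mul_nonneg hθ (by linarith)
  have hℓ : ℓ (b + (a + θ * (c - a) - ℓ b) • u) = a + θ * (c - a) := by simp [hu]
  calc |ℓ x - (a + θ * (c - a))| = ‖ℓ (x - (b + (a + θ * (c - a) - ℓ b) • u))‖ := by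
        rw [map_sub, hℓ, Real.norm_eq_abs]
    _ ≤ ‖ℓ‖ * (κ * (θ ^ 2 * (c - a))) := by
        refine (ℓ.le_opNorm _).trans (by gcongr; rwa [norm_sub_rev])
    _ = (‖ℓ‖ * κ * θ) * (θ * (c - a)) := by ring
    _ ≤ 1 / 2 * (θ * (c - a)) := mul_le_mul_of_nonneg_right hκ hg
    _ = θ * (c - a) / 2 := by ring

/-- Only finitely many `b i` have depth `θ i ≥ θ₀`, and at small heights their witnesses stay
away from `x`. -/
theorem exists_height_forall_depth_lt {ι : Type*} {b : ι → V} {C θ : ι → ℝ}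
    (hθ0 : ∀ i, 0 < θ i) (hθ : Tendsto θ cofinite (𝓝 0)) {x : V} (hxb : x ∉ range b) (κ : ℝ)
    {θ₀ : ℝ} (hθ₀ : 0 < θ₀) :
    ∃ δ > 0, ∀ i, ∀ q ∈ gapWitnesses K ℓ u (C i) (θ i) (b i), q.1 < δ → ‖q.2 - x‖ ≤ κ * q.1 →
      θ i < θ₀ := by
  set M : ι → ℝ := fun i => |κ| + |(C i + θ i) * ‖u‖ / θ i ^ 2|
  have hfin : {i | θ₀ ≤ θ i}.Finite := by
    simpa using Filter.eventually_cofinite.1 (hθ.eventually (gt_mem_nhds hθ₀))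
  have hδ : ∀ᶠ δ in 𝓝[>] (0 : ℝ), ∀ i ∈ {i | θ₀ ≤ θ i}, δ * M i < ‖x - b i‖ := by
    refine hfin.eventually_all.2 fun i _ => ?_
    have hxi : 0 < ‖x - b i‖ := norm_pos_iff.2 (sub_ne_zero.2 fun h => hxb ⟨i, h.symm⟩)
    have : Tendsto (fun δ : ℝ => δ * M i) (𝓝 0) (𝓝 0) := by
      simpa using (tendsto_id (x := 𝓝 (0 : ℝ))).mul_const (M i)
    exact (this.mono_left nhdsWithin_le_nhds).eventually (gt_mem_nhds hxi)
  obtain ⟨δ, hδ, hδpos⟩ := (hδ.and self_mem_nhdsWithin).exists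
  refine ⟨δ, hδpos, fun i q hqi hqδ hqx => ?_⟩
  by_contra! h
  have hq1 : 0 < q.1 := gapWitnesses_subset_upperHalf (hθ0 i) hqi
  have hqb := norm_sub_le_of_mem_gapWitnesses (hθ0 i) hqi
  have hxb := norm_sub_le_norm_sub_add_norm_sub x q.2 (b i)
  rw [norm_sub_rev x q.2] at hxb
  have h1 : ‖x - b i‖ ≤ M i * q.1 := by
    nlinarith [le_abs_self κ, le_abs_self ((C i + θ i) * ‖u‖ / θ i ^ 2)]
  have h2 : M i * q.1 ≤ M i * δ := mul_le_mul_of_nonneg_left hqδ.le (by positivity)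
  linarith [hδ i h]

theorem conicalLimitSet_iUnion_gapWitnesses_subset {ι : Type*} (hu : ℓ u = 1) (b : ι → V)
    (C θ : ι → ℝ) (hθ0 : ∀ i, 0 < θ i) (hθ1 : ∀ i, θ i ≤ 1 / 2)
    (hθ : Tendsto θ cofinite (𝓝 0)) :
    conicalLimitSet (⋃ i, gapWitnesses K ℓ u (C i) (θ i) (b i)) ⊆ range b := by
  intro x hx
  by_contra hxb
  obtain ⟨κ, hκ, hx⟩ := (mem_conicalLimitSet_iff_s5
    (iUnion_subset fun i => gapWitnesses_subset_upperHalf (hθ0 i))).1 hx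
  refine not_forall_exists_shallow_gap K (ℓ x) fun η hη => ?_
  set θ₀ := min (1 / (2 * (‖ℓ‖ * κ + 1))) (η / 2)
  obtain ⟨δ, hδ, hsmall⟩ := exists_height_forall_depth_lt (K := K) (ℓ := ℓ) (u := u)
    (C := C) hθ0 hθ hxb κ (by positivity : 0 < θ₀)
  obtain ⟨q, hqE, hqδ, hqx⟩ := hx δ hδ
  obtain ⟨i, hqi⟩ := mem_iUnion.1 hqE
  have hθi := hsmall i q hqi hqδ hqx
  have hθℓ : ‖ℓ‖ * κ * θ i ≤ 1 / 2 := by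
    have h := hθi.trans_le (min_le_left _ _)
    rw [lt_div_iff₀ (by positivity)] at h
    nlinarith [norm_nonneg ℓ, hθ0 i]
  obtain ⟨a, ha, c, hc, hac, hK, hℓ⟩ :=
    exists_gap_of_mem_gapWitnesses hu hqi hqx (hθ0 i).le hθℓ
  have hθη : θ i < η / 2 := hθi.trans_le (min_le_right _ _)
  have hθ1i := hθ1 i
  have hθ0i := hθ0 i
  rw [abs_le] at hℓ
  exact ⟨a, ha, c, hc, hK, ⟨by nlinarith, by nlinarith⟩, by nlinarith⟩
theorem isConicalLimitSet_of_isConicalGapPoint {B : Set V} (hu : ℓ u = 1) (hB : B.Countable)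
    (hK : ∀ b ∈ B, IsConicalGapPoint K (ℓ b)) : IsConicalLimitSet B := by
  have : Countable B := hB.to_subtype
  obtain ⟨idx, hidx⟩ := exists_injective_nat B
  choose C hC using fun b : B => hK b b.2
  let θ : B → ℝ := fun b => 1 / ((idx b : ℝ) + 2)
  have hθ0 : ∀ b, 0 < θ b := fun b => by positivity
  have hθ1 : ∀ b, θ b ≤ 1 / 2 := fun b => by
    simp only [θ]
    gcongr
    linarith [(idx b).cast_nonneg (α := ℝ)]
  have hθ : Tendsto θ cofinite (𝓝 0) := by
    have h : Tendsto (fun k : ℕ => 1 / ((k : ℝ) + 2)) atTop (𝓝 0) := by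
      refine ((tendsto_one_div_add_atTop_nhds_zero_nat (𝕜 := ℝ)).comp
        (tendsto_add_atTop_nat 1)).congr fun k => ?_
      simp only [Function.comp, Nat.cast_add, Nat.cast_one]
      ring
    exact h.comp (Nat.cofinite_eq_atTop ▸ hidx.tendsto_cofinite)
  refine ⟨⋃ b : B, gapWitnesses K ℓ u (C b) (θ b) b,
    iUnion_subset fun b => gapWitnesses_subset_upperHalf (hθ0 b), subset_antisymm ?_ ?_⟩
  · simpa using conicalLimitSet_iUnion_gapWitnesses_subset hu Subtype.val C θ hθ0 hθ1 hθ
  · intro b hb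
    exact conicalLimitSet_mono (subset_iUnion (fun b : B => gapWitnesses K ℓ u (C b) (θ b) b)
      ⟨b, hb⟩) (mem_conicalLimitSet_gapWitnesses (hθ0 _) ((hθ1 _).trans (by norm_num)) (hC _))

end Gaps

section DigitSequences

theorem exists_first_diff_lt {d e : ℕ → Bool} {n : ℕ} (h : ¬ ∀ k < n, d k = e k) :
    ∃ j < n, (∀ k < j, d k = e k) ∧ d j ≠ e j := by
  classical
  have hex : ∃ j, j < n ∧ d j ≠ e j := by simpa using h
  obtain ⟨hjn, hj⟩ := Nat.find_spec hex
  exact ⟨Nat.find hex, hjn, fun k hk => by_contra fun hne =>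
    Nat.find_min hex hk ⟨hk.trans hjn, hne⟩, hj⟩

theorem exists_first_diff {d e : ℕ → Bool} (h : d ≠ e) :
    ∃ j, (∀ k < j, d k = e k) ∧ d j ≠ e j := by
  obtain ⟨n, hn⟩ := Function.ne_iff.1 h
  obtain ⟨j, -, hj⟩ := exists_first_diff_lt (n := n + 1) fun h => hn (h n n.lt_succ_self)
  exact ⟨j, hj⟩

/-- The digits of the left endpoint of the level-`n` gap in the level-`n` cylinder of `w`. -/
def lowerEnd (w : ℕ → Bool) (n : ℕ) : ℕ → Bool := fun k => if k < n then w k else decide (n < k)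

/-- The digits of the right endpoint of the level-`n` gap in the level-`n` cylinder of `w`. -/
def upperEnd (w : ℕ → Bool) (n : ℕ) : ℕ → Bool := fun k => if k < n then w k else decide (k = n)

/-- `d` is of the form `lowerEnd d m`. -/
def IsLowerGapEnd (d : ℕ → Bool) (m : ℕ) : Prop := d m = false ∧ ∀ k, m < k → d k = true

theorem IsLowerGapEnd.unique {d : ℕ → Bool} {m m' : ℕ} (h : IsLowerGapEnd d m)
    (h' : IsLowerGapEnd d m') : m = m' := by
  by_contra hne
  rcases lt_or_gt_of_ne hne with hlt | hlt
  · exact absurd (h.2 m' hlt) (by simp [h'.1])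
  · exact absurd (h'.2 m hlt) (by simp [h.1])

theorem lowerEnd_eq_self {d : ℕ → Bool} {m : ℕ} (h : IsLowerGapEnd d m) : lowerEnd d m = d := by
  funext k
  rcases lt_trichotomy k m with hk | rfl | hk
  · simp [lowerEnd, hk]
  · simp [lowerEnd, h.1]
  · simp [lowerEnd, h.2 k hk, hk, hk.not_gt]

theorem exists_isLowerGapEnd {d : ℕ → Bool} {n j : ℕ} (hn : ∀ k, n ≤ k → d k = true)
    (hj : d j = false) : ∃ m, IsLowerGapEnd d m := by
  induction n with
  | zero => simp [hn j (Nat.zero_le j)] at hj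
  | succ n ih =>
    cases hdn : d n
    · exact ⟨n, hdn, fun k hk => hn k hk⟩
    · exact ih fun k hk => (Nat.eq_or_lt_of_le hk).elim (· ▸ hdn) (hn k)

/-- The digits `w` followed by alternating digits `false, true, false, …`. -/
def altExt {n : ℕ} (w : Fin n → Bool) (k : ℕ) : Bool :=
  if h : k < n then w ⟨k, h⟩ else Nat.bodd (k - n)

def eventuallyAlternating : Set (ℕ → Bool) := range fun w : Σ n, Fin n → Bool => altExt w.2

theorem eventuallyAlternating_countable : eventuallyAlternating.Countable := countable_range _

theorem altExt_succ {n : ℕ} (w : Fin n → Bool) {k : ℕ} (hk : n ≤ k) :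
    altExt w (k + 1) = !altExt w k := by
  simp [altExt, show ¬ k + 1 < n by omega, show ¬ k < n by omega,
    show k + 1 - n = (k - n) + 1 by omega]

theorem exists_alternating_of_mem {d : ℕ → Bool} (hd : d ∈ eventuallyAlternating) :
    ∃ N, ∀ k, N ≤ k → d (k + 1) = !d k := by
  obtain ⟨⟨n, w⟩, rfl⟩ := hd
  exact ⟨n, fun k hk => altExt_succ w hk⟩

end DigitSequences

/-- A Cantor set in the line: each closed level-`n` cylinder has length `σ n` and splits into two
level-`n+1` cylinders separated by a gap of length `γ n = σ n - 2 σ (n+1)`. -/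
structure CantorScale where
  σ : ℕ → ℝ
  σ_pos : ∀ n, 0 < σ n
  two_mul_σ_succ_lt : ∀ n, 2 * σ (n + 1) < σ n

namespace CantorScale

variable (S : CantorScale)

/-- The offset of the right child of a level-`n` cylinder. -/
def χ (n : ℕ) : ℝ := S.σ n - S.σ (n + 1)

def γ (n : ℕ) : ℝ := S.σ n - 2 * S.σ (n + 1)

theorem γ_pos (n : ℕ) : 0 < S.γ n := by
  have := S.two_mul_σ_succ_lt n; unfold γ; linarith

theorem σ_succ_lt_χ (n : ℕ) : S.σ (n + 1) < S.χ n := by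
  have := S.two_mul_σ_succ_lt n; unfold χ; linarith

theorem σ_succ_add_γ (n : ℕ) : S.σ (n + 1) + S.γ n = S.χ n := by
  simp only [χ, γ]; ring

theorem χ_pos (n : ℕ) : 0 < S.χ n := (S.σ_pos _).trans (S.σ_succ_lt_χ n)

theorem χ_le_σ (n : ℕ) : S.χ n ≤ S.σ n := by
  linarith [S.σ_pos (n + 1), show S.χ n = S.σ n - S.σ (n + 1) from rfl]

theorem σ_strictAnti : StrictAnti S.σ :=
  strictAnti_nat_of_succ_lt fun n => by linarith [S.two_mul_σ_succ_lt n, S.σ_pos (n + 1)]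

theorem tendsto_σ : Tendsto S.σ atTop (𝓝 0) := by
  have hle : ∀ n, S.σ n ≤ S.σ 0 * (1 / 2) ^ n := by
    intro n
    induction n with
    | zero => simp
    | succ n ih => rw [pow_succ]; linarith [S.two_mul_σ_succ_lt n]
  exact squeeze_zero (fun n => (S.σ_pos n).le) hle (by
    simpa using (tendsto_pow_atTop_nhds_zero_of_lt_one (by norm_num : (0 : ℝ) ≤ 1 / 2)
      (by norm_num)).const_mul (S.σ 0))

theorem hasSum_χ_add (n : ℕ) : HasSum (fun k => S.χ (k + n)) (S.σ n) := by
  refine (hasSum_iff_tendsto_nat_of_nonneg (fun k => (S.χ_pos _).le) _).2 ?_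
  have h : ∀ K, ∑ k ∈ Finset.range K, S.χ (k + n) = S.σ n - S.σ (K + n) := fun K => by
    simpa [χ, add_right_comm] using Finset.sum_range_sub' (fun k => S.σ (k + n)) K
  simp_rw [h]
  simpa using tendsto_const_nhds.sub (S.tendsto_σ.comp (tendsto_add_atTop_nat n))

/-- The left child at level `k` is chosen when `d k` is false. -/
def term (d : ℕ → Bool) (k : ℕ) : ℝ := if d k then S.χ k else 0

/-- The left endpoint of the level-`n` cylinder of `d`. -/
def base (d : ℕ → Bool) (n : ℕ) : ℝ := ∑ k ∈ Finset.range n, S.term d k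

noncomputable def ψ (d : ℕ → Bool) : ℝ := ∑' k, S.term d k

variable {S}

theorem term_nonneg (d : ℕ → Bool) (k : ℕ) : 0 ≤ S.term d k := by
  unfold term; split <;> simp [(S.χ_pos k).le]

theorem term_le_χ (d : ℕ → Bool) (k : ℕ) : S.term d k ≤ S.χ k := by
  unfold term; split <;> simp [(S.χ_pos k).le]

theorem summable_term (d : ℕ → Bool) : Summable (S.term d) :=
  Summable.of_nonneg_of_le (term_nonneg d) (term_le_χ d)
    (by simpa using (S.hasSum_χ_add 0).summable)

theorem base_succ (d : ℕ → Bool) (n : ℕ) : S.base d (n + 1) = S.base d n + S.term d n :=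
  Finset.sum_range_succ _ _

theorem base_nonneg (d : ℕ → Bool) (n : ℕ) : 0 ≤ S.base d n :=
  Finset.sum_nonneg fun k _ => term_nonneg d k

theorem base_congr {d e : ℕ → Bool} {n : ℕ} (h : ∀ k < n, d k = e k) :
    S.base d n = S.base e n :=
  Finset.sum_congr rfl fun k hk => by rw [term, term, h k (Finset.mem_range.1 hk)]

/-- Cylinders are nested: the level-`m` cylinder of `d` lies in its level-`n` cylinder. -/
theorem base_le_base_and_base_add_σ_le {n m : ℕ} (d : ℕ → Bool) (h : n ≤ m) :
    S.base d n ≤ S.base d m ∧ S.base d m + S.σ m ≤ S.base d n + S.σ n := by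
  have hsum : S.base d m = S.base d n + ∑ k ∈ Finset.Ico n m, S.term d k := by
    rw [base, base, Finset.sum_range_add_sum_Ico _ h]
  have hχ : ∑ k ∈ Finset.Ico n m, S.χ k = S.σ n - S.σ m := by
    have := Finset.sum_Ico_sub (fun k => -S.σ k) h
    simp only [sub_neg_eq_add, neg_add_eq_sub] at this
    rw [← this]
    rfl
  have h1 : 0 ≤ ∑ k ∈ Finset.Ico n m, S.term d k := Finset.sum_nonneg fun k _ => term_nonneg d k
  have h2 : ∑ k ∈ Finset.Ico n m, S.term d k ≤ S.σ n - S.σ m :=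
    hχ ▸ Finset.sum_le_sum fun k _ => term_le_χ d k
  constructor <;> linarith

theorem base_le_ψ (d : ℕ → Bool) (n : ℕ) : S.base d n ≤ S.ψ d := by
  rw [ψ, ← (summable_term d).sum_add_tsum_nat_add n]
  exact le_add_of_nonneg_right (tsum_nonneg fun k => term_nonneg d _)

theorem ψ_le_base_add_σ (d : ℕ → Bool) (n : ℕ) : S.ψ d ≤ S.base d n + S.σ n := by
  rw [ψ, ← (summable_term d).sum_add_tsum_nat_add n, ← (S.hasSum_χ_add n).tsum_eq]
  exact add_le_add le_rfl (((summable_nat_add_iff n).2 (summable_term d)).tsum_le_tsum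
    (fun k => term_le_χ d _) (S.hasSum_χ_add n).summable)

theorem ψ_le_of_eq_false {d : ℕ → Bool} {n : ℕ} (h : d n = false) :
    S.ψ d ≤ S.base d n + S.σ (n + 1) := by
  simpa [base_succ, term, h] using ψ_le_base_add_σ d (n + 1)

theorem base_add_χ_le_ψ {d : ℕ → Bool} {n : ℕ} (h : d n = true) :
    S.base d n + S.χ n ≤ S.ψ d := by
  simpa [base_succ, term, h] using base_le_ψ d (n + 1)

theorem abs_ψ_sub_ψ_le {d e : ℕ → Bool} {n : ℕ} (h : ∀ k < n, d k = e k) :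
    |S.ψ d - S.ψ e| ≤ S.σ n := by
  have := base_congr (S := S) h
  rw [abs_le]
  constructor <;> linarith [base_le_ψ (S := S) d n, ψ_le_base_add_σ (S := S) d n,
    base_le_ψ (S := S) e n, ψ_le_base_add_σ (S := S) e n]

/-- The lexicographic order of digit sequences is the order of the line, with room for the gap. -/
theorem ψ_add_γ_le {d e : ℕ → Bool} {j : ℕ} (h : ∀ k < j, d k = e k) (hd : d j = false)
    (he : e j = true) : S.ψ d + S.γ j ≤ S.ψ e := by
  have := base_congr (S := S) h
  linarith [ψ_le_of_eq_false (S := S) hd, base_add_χ_le_ψ (S := S) he, S.σ_succ_add_γ j]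

theorem ψ_eq_base_add_tsum (d : ℕ → Bool) (n : ℕ) :
    S.ψ d = S.base d n + ∑' k, S.term d (k + n) :=
  ((summable_term d).sum_add_tsum_nat_add n).symm

theorem ψ_lowerEnd (w : ℕ → Bool) (n : ℕ) : S.ψ (lowerEnd w n) = S.base w n + S.σ (n + 1) := by
  have hbase : S.base (lowerEnd w n) n = S.base w n :=
    base_congr fun k hk => by simp [lowerEnd, hk]
  have htail : (fun k => S.term (lowerEnd w n) (k + (n + 1))) = fun k => S.χ (k + (n + 1)) := by
    funext k; simp [term, lowerEnd, show ¬ k + (n + 1) < n by omega, show n < k + (n + 1) by omega]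
  rw [ψ_eq_base_add_tsum _ (n + 1), htail, (S.hasSum_χ_add _).tsum_eq, base_succ, hbase]
  simp [term, lowerEnd]

theorem ψ_upperEnd (w : ℕ → Bool) (n : ℕ) : S.ψ (upperEnd w n) = S.base w n + S.χ n := by
  have hbase : S.base (upperEnd w n) n = S.base w n :=
    base_congr fun k hk => by simp [upperEnd, hk]
  have htail : (fun k => S.term (upperEnd w n) (k + (n + 1))) = fun _ => 0 := by
    funext k; simp [term, upperEnd, show ¬ k + (n + 1) < n by omega, show k + (n + 1) ≠ n by omega]
  rw [ψ_eq_base_add_tsum _ (n + 1), htail, tsum_zero, base_succ, hbase]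
  simp [term, upperEnd]

theorem disjoint_gap_range_ψ (w : ℕ → Bool) (n : ℕ) :
    Disjoint (Ioo (S.base w n + S.σ (n + 1)) (S.base w n + S.χ n)) (range S.ψ) := by
  rw [disjoint_right]
  rintro _ ⟨e, rfl⟩ ⟨h1, h2⟩
  by_cases hagree : ∀ k < n, e k = w k
  · rw [← base_congr hagree] at h1 h2
    cases he : e n
    · linarith [ψ_le_of_eq_false (S := S) he]
    · linarith [base_add_χ_le_ψ (S := S) he]
  obtain ⟨j, hjn, hj, hjne⟩ := exists_first_diff_lt hagree
  cases hej : e j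
  · have := ψ_add_γ_le (S := S) (e := lowerEnd w n)
      (fun k hk => by simp [lowerEnd, hk.trans hjn, hj k hk]) hej
      (by simpa [lowerEnd, hjn, hej] using hjne)
    linarith [ψ_lowerEnd (S := S) w n, S.γ_pos j]
  · have := ψ_add_γ_le (S := S) (d := upperEnd w n)
      (fun k hk => by simp [upperEnd, hk.trans hjn, hj k hk])
      (by simpa [upperEnd, hjn, hej] using hjne) hej
    linarith [ψ_upperEnd (S := S) w n, S.γ_pos j]

theorem isConicalGapPoint_ψ {C : ℝ} (hC : ∀ n, S.σ n ≤ C * S.γ n) (d : ℕ → Bool) :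
    IsConicalGapPoint (range S.ψ) (S.ψ d) := by
  refine ⟨C, fun δ hδ => ?_⟩
  obtain ⟨n, hn⟩ := (S.tendsto_σ.eventually (gt_mem_nhds hδ)).exists
  refine ⟨_, ⟨lowerEnd d n, rfl⟩, _, ⟨upperEnd d n, rfl⟩, ?_⟩
  rw [ψ_lowerEnd, ψ_upperEnd]
  have hγ : S.σ (n + 1) + S.γ n = S.χ n := S.σ_succ_add_γ n
  have hσ : 0 < S.σ (n + 1) := S.σ_pos _
  refine ⟨by linarith [S.γ_pos n], by linarith [S.χ_le_σ n], disjoint_gap_range_ψ d n, ?_⟩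
  rw [show S.base d n + S.χ n - (S.base d n + S.σ (n + 1)) = S.γ n by linarith, abs_le]
  constructor <;> linarith [base_le_ψ (S := S) d n, ψ_le_base_add_σ (S := S) d n, hC n,
    S.two_mul_σ_succ_lt n]

variable (S)

/-- Greedy expansion: the left endpoint of the level-`n` cylinder chosen for `x`. -/
noncomputable def greedyBase (x : ℝ) : ℕ → ℝ
  | 0 => 0
  | n + 1 => greedyBase x n + if greedyBase x n + S.χ n ≤ x then S.χ n else 0

/-- The greedy digits of `x`: take the right child whenever `x` reaches it. -/
noncomputable def digits (x : ℝ) (n : ℕ) : Bool := decide (S.greedyBase x n + S.χ n ≤ x)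

variable {S}

theorem greedyBase_eq_base (x : ℝ) (n : ℕ) : S.greedyBase x n = S.base (S.digits x) n := by
  induction n with
  | zero => rfl
  | succ n ih => simp [greedyBase, base_succ, term, digits, ← ih]

theorem digits_eq_true_iff {x : ℝ} {n : ℕ} :
    S.digits x n = true ↔ S.base (S.digits x) n + S.χ n ≤ x := by
  simp [digits, greedyBase_eq_base]

theorem lt_base_add_χ_of_digits_eq_false {x : ℝ} {n : ℕ} (h : S.digits x n = false) :
    x < S.base (S.digits x) n + S.χ n := by
  simpa [digits, greedyBase_eq_base] using h

theorem digits_eq_of_forall {x : ℝ} {d : ℕ → Bool}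
    (h : ∀ n, d n = true ↔ S.base d n + S.χ n ≤ x) : S.digits x = d := by
  funext n
  induction n using Nat.strong_induction_on with
  | _ n ih =>
    rw [Bool.eq_iff_iff, digits_eq_true_iff, h n, base_congr ih]

theorem digits_ψ (d : ℕ → Bool) : S.digits (S.ψ d) = d := by
  refine digits_eq_of_forall fun n => ⟨base_add_χ_le_ψ, fun h => ?_⟩
  by_contra hn
  rw [Bool.not_eq_true] at hn
  linarith [ψ_le_of_eq_false (S := S) hn, S.σ_succ_lt_χ n]

theorem ψ_injective : Function.Injective S.ψ :=
  Function.LeftInverse.injective digits_ψ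

theorem ψ_digits_le {x : ℝ} (hx : 0 ≤ x) : S.ψ (S.digits x) ≤ x := by
  refine Real.tsum_le_of_sum_range_le (term_nonneg _) fun n => ?_
  rw [← base, ← greedyBase_eq_base]
  induction n with
  | zero => exact hx
  | succ n ih => simp only [greedyBase]; split_ifs <;> linarith

theorem le_ψ_digits_or_eventually_true (x : ℝ) :
    x ≤ S.ψ (S.digits x) ∨ ∃ n, ∀ k, n ≤ k → S.digits x k = true := by
  by_cases h : ∃ n, S.base (S.digits x) n + S.σ n < x
  · obtain ⟨n, hn⟩ := h
    have key : ∀ k, n ≤ k → S.digits x k = true ∧ S.base (S.digits x) k + S.σ k < x := by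
      refine fun k hk => Nat.le_induction ?_ (fun k _ ih => ?_) k hk
      · exact ⟨digits_eq_true_iff.2 (by linarith [S.χ_le_σ n]), hn⟩
      · have hk1 : S.base (S.digits x) (k + 1) + S.σ (k + 1) < x := by
          rw [base_succ, term, if_pos ih.1]
          linarith [ih.2, show S.χ k = S.σ k - S.σ (k + 1) from rfl]
        exact ⟨digits_eq_true_iff.2 (by linarith [S.χ_le_σ (k + 1)]), hk1⟩
    exact Or.inr ⟨n, fun k hk => (key k hk).1⟩
  · simp only [not_exists, not_lt] at h
    refine Or.inl (le_of_tendsto_of_tendsto' tendsto_const_nhds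
      (by simpa using tendsto_const_nhds.add S.tendsto_σ) fun n => ?_)
    linarith [h n, base_le_ψ (S := S) (S.digits x) n]

theorem ψ_of_isLowerGapEnd {d : ℕ → Bool} {m : ℕ} (h : IsLowerGapEnd d m) :
    S.ψ d = S.base d m + S.σ (m + 1) := by
  rw [← ψ_lowerEnd, lowerEnd_eq_self h]


open Classical in
/-- The ratio by which `transfer S T` stretches the gap whose left endpoint has digits `d`; the
value `1` elsewhere makes `transfer S T` a translation outside the hulls of the Cantor sets. -/
noncomputable def gapRatio (S T : CantorScale) (d : ℕ → Bool) : ℝ :=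
  if h : ∃ m, IsLowerGapEnd d m then T.γ h.choose / S.γ h.choose else 1

/-- The map sending the Cantor set of `S` to that of `T` digit by digit and each gap of `S`
affinely onto the corresponding gap of `T`. -/
noncomputable def transfer (S T : CantorScale) (x : ℝ) : ℝ :=
  T.ψ (S.digits x) + (x - S.ψ (S.digits x)) * gapRatio S T (S.digits x)

variable {T : CantorScale}

theorem gapRatio_pos (d : ℕ → Bool) : 0 < gapRatio S T d := by
  unfold gapRatio
  split_ifs
  exacts [div_pos (T.γ_pos _) (S.γ_pos _), one_pos]

theorem gapRatio_mul_gapRatio (d : ℕ → Bool) : gapRatio S T d * gapRatio T S d = 1 := by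
  unfold gapRatio
  split_ifs with h
  · field_simp [(S.γ_pos h.choose).ne', (T.γ_pos h.choose).ne']
  · exact one_mul 1

theorem transfer_ψ (d : ℕ → Bool) : transfer S T (S.ψ d) = T.ψ d := by
  simp [transfer, digits_ψ]

theorem ψ_digits_le_transfer {x : ℝ} (hx : 0 ≤ x) : T.ψ (S.digits x) ≤ transfer S T x :=
  le_add_of_nonneg_right (mul_nonneg (sub_nonneg.2 (ψ_digits_le hx)) (gapRatio_pos _).le)

theorem gapRatio_of_isLowerGapEnd {d : ℕ → Bool} {m : ℕ} (h : IsLowerGapEnd d m) :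
    gapRatio S T d = T.γ m / S.γ m := by
  have hex : ∃ m, IsLowerGapEnd d m := ⟨m, h⟩
  rw [gapRatio, dif_pos hex, hex.choose_spec.unique h]

/-- `transfer` maps the gap of `S` containing `x` into the corresponding gap of `T`. -/
theorem transfer_lt_ψ_upperEnd {x : ℝ} {m : ℕ} (hm : IsLowerGapEnd (S.digits x) m) :
    transfer S T x < T.ψ (upperEnd (S.digits x) m) := by
  have hx : x - S.ψ (S.digits x) < S.γ m := by
    rw [ψ_of_isLowerGapEnd hm]
    linarith [lt_base_add_χ_of_digits_eq_false hm.1, S.σ_succ_add_γ m]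
  have hstretch : (x - S.ψ (S.digits x)) * gapRatio S T (S.digits x) < T.γ m := by
    rw [gapRatio_of_isLowerGapEnd hm, mul_div_assoc', div_lt_iff₀ (S.γ_pos m), mul_comm]
    exact mul_lt_mul_of_pos_left hx (T.γ_pos m)
  rw [ψ_upperEnd, ← T.σ_succ_add_γ m, ← add_assoc, ← ψ_of_isLowerGapEnd hm, transfer]
  linarith

theorem transfer_lt_ψ {x : ℝ} {e : ℕ → Bool} {j : ℕ} (hj : ∀ k < j, S.digits x k = e k)
    (hxj : S.digits x j = false) (hej : e j = true) : transfer S T x < T.ψ e := by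
  by_cases hgap : ∃ m, IsLowerGapEnd (S.digits x) m
  · obtain ⟨m, hm⟩ := hgap
    have hjm : j ≤ m := by
      by_contra! h
      simp [hm.2 j h] at hxj
    refine (transfer_lt_ψ_upperEnd hm).trans_le ?_
    rcases hjm.lt_or_eq with hjm | rfl
    · exact le_of_add_le_of_nonneg_left (ψ_add_γ_le
        (fun k hk => by simp [upperEnd, hk.trans hjm, hj k hk]) (by simp [upperEnd, hjm, hxj])
        hej) (T.γ_pos j).le
    · rw [ψ_upperEnd, base_congr hj]
      exact base_add_χ_le_ψ hej
  · have hratio : gapRatio S T (S.digits x) = 1 := dif_neg hgap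
    have hx : x ≤ S.ψ (S.digits x) := (le_ψ_digits_or_eventually_true x).resolve_right
      fun ⟨n, hn⟩ => hgap (exists_isLowerGapEnd hn hxj)
    calc transfer S T x ≤ T.ψ (S.digits x) := by
          rw [transfer, hratio, mul_one]
          linarith
      _ < T.ψ (S.digits x) + T.γ j := lt_add_of_pos_right _ (T.γ_pos j)
      _ ≤ T.ψ e := ψ_add_γ_le hj hxj hej

theorem digits_eq_false_and_eq_true_of_le {x y : ℝ} (hxy : x ≤ y) {j : ℕ}
    (hj : ∀ k < j, S.digits x k = S.digits y k) (hne : S.digits x j ≠ S.digits y j) :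
    S.digits x j = false ∧ S.digits y j = true := by
  cases hx : S.digits x j
  · refine ⟨rfl, ?_⟩
    cases hy : S.digits y j
    · simp [hx, hy] at hne
    · rfl
  · have := digits_eq_true_iff.1 hx
    rw [base_congr hj] at this
    simp [hx, digits_eq_true_iff.2 (this.trans hxy)] at hne

theorem strictMono_transfer : StrictMono (transfer S T) := by
  intro x y hxy
  by_cases hd : S.digits x = S.digits y
  · simp only [transfer, hd]
    nlinarith [gapRatio_pos (S := S) (T := T) (S.digits y)]
  obtain ⟨j, hj, hne⟩ := exists_first_diff hd
  obtain ⟨hxj, hyj⟩ := digits_eq_false_and_eq_true_of_le hxy.le hj hne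
  have hy : 0 ≤ y := by
    linarith [digits_eq_true_iff.1 hyj, base_nonneg (S := S) (S.digits y) j, S.χ_pos j]
  exact (transfer_lt_ψ hj hxj hyj).trans_le (ψ_digits_le_transfer hy)

theorem digits_transfer (x : ℝ) : T.digits (transfer S T x) = S.digits x := by
  refine digits_eq_of_forall fun n => ?_
  rw [digits_eq_true_iff, ← ψ_upperEnd, ← ψ_upperEnd, ← transfer_ψ (S := S) (T := T)]
  exact strictMono_transfer.le_iff_le.symm

theorem transfer_transfer (x : ℝ) : transfer T S (transfer S T x) = x := by
  have h := digits_transfer (S := S) (T := T) x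
  simp only [transfer] at h ⊢
  rw [h, add_sub_cancel_left, mul_assoc, gapRatio_mul_gapRatio, mul_one, add_sub_cancel]

/-- `transfer S T` as a homeomorphism of the line; its inverse is `transfer T S`. -/
noncomputable def transferHomeomorph (S T : CantorScale) : ℝ ≃ₜ ℝ :=
  (StrictMono.orderIsoOfSurjective _ strictMono_transfer
    fun y => ⟨_, transfer_transfer (S := T) (T := S) y⟩).toHomeomorph

theorem transferHomeomorph_apply (x : ℝ) : transferHomeomorph S T x = transfer S T x := rfl


theorem base_add_σ_succ_le_ψ {d : ℕ → Bool} {n j : ℕ} (hnj : n ≤ j) (hj : d j = true) :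
    S.base d n + S.σ (j + 1) ≤ S.ψ d := by
  linarith [(base_le_base_and_base_add_σ_le (S := S) d hnj).1, base_add_χ_le_ψ (S := S) hj,
    S.σ_succ_lt_χ j]

theorem ψ_le_base_add_σ_sub {d : ℕ → Bool} {n j : ℕ} (hnj : n ≤ j) (hj : d j = false) :
    S.ψ d ≤ S.base d n + S.σ n - S.σ (j + 1) := by
  linarith [(base_le_base_and_base_add_σ_le (S := S) d hnj).2, ψ_le_of_eq_false (S := S) hj,
    S.σ_succ_lt_χ j, show S.χ j = S.σ j - S.σ (j + 1) from rfl]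

theorem ψ_mem_inner_cylinder {d : ℕ → Bool} {N : ℕ} (hd : ∀ k, N ≤ k → d (k + 1) = !d k)
    (n : ℕ) : S.base d n + S.σ (max n N + 2) ≤ S.ψ d ∧
      S.ψ d ≤ S.base d n + S.σ n - S.σ (max n N + 2) := by
  set M := max n N
  have hM := hd M (le_max_right n N)
  have hanti : S.σ (M + 2) ≤ S.σ (M + 1) := S.σ_strictAnti.antitone (by omega)
  cases hdM : d M
  · have hdM1 : d (M + 1) = true := by simp [hM, hdM]
    exact ⟨base_add_σ_succ_le_ψ (by omega) hdM1,
      by linarith [ψ_le_base_add_σ_sub (S := S) (le_max_left n N) hdM]⟩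
  · have hdM1 : d (M + 1) = false := by simp [hM, hdM]
    exact ⟨by linarith [base_add_σ_succ_le_ψ (S := S) (le_max_left n N) hdM],
      ψ_le_base_add_σ_sub (by omega) hdM1⟩

theorem σ_le_abs_sub_ψ {d : ℕ → Bool} {N : ℕ} (hd : ∀ k, N ≤ k → d (k + 1) = !d k)
    {w : ℕ → Bool} {m : ℕ} {v : ℝ} (hv : v ∈ Ioo (S.base w m + S.σ (m + 1)) (S.base w m + S.χ m)) :
    S.σ (max (m + 1) N + 2) ≤ |v - S.ψ d| := by
  obtain ⟨hv1, hv2⟩ := hv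
  have hχm : S.χ m = S.σ m - S.σ (m + 1) := rfl
  by_cases hagree : ∀ k < m, d k = w k
  · obtain ⟨h1, h2⟩ := ψ_mem_inner_cylinder (S := S) hd (m + 1)
    rw [base_succ, term, base_congr hagree] at h1 h2
    have hσ := S.σ_pos (max (m + 1) N + 2)
    cases hdm : d m
    · simp only [hdm, Bool.false_eq_true, ↓reduceIte, add_zero] at h1 h2
      rw [abs_of_pos (by linarith)]
      linarith
    · simp only [hdm, ↓reduceIte] at h1 h2
      rw [abs_of_neg (by linarith)]
      linarith
  obtain ⟨j, hjm, hj, hne⟩ := exists_first_diff_lt hagree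
  have hσ : S.σ (max (m + 1) N + 2) ≤ S.σ (m + 1) := S.σ_strictAnti.antitone (by omega)
  obtain ⟨hnest1, hnest2⟩ := base_le_base_and_base_add_σ_le (S := S) w (Nat.succ_le_of_lt hjm)
  have hbase := base_congr (S := S) hj
  have hjχ := S.σ_succ_lt_χ j
  cases hdj : d j
  · have hwj : w j = true := by rw [Bool.eq_not.2 (Ne.symm hne), hdj]; rfl
    have := ψ_le_of_eq_false (S := S) hdj
    rw [base_succ, term, if_pos hwj] at hnest1
    rw [abs_of_pos (by linarith [S.σ_pos (m + 1)])]
    linarith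
  · have hwj : w j = false := by rw [Bool.eq_not.2 (Ne.symm hne), hdj]; rfl
    have := base_add_χ_le_ψ (S := S) hdj
    rw [base_succ, term, if_neg (by simp [hwj])] at hnest2
    rw [abs_of_neg (by linarith [S.σ_pos (m + 1)])]
    linarith

theorem ψ_const_true : S.ψ (fun _ => true) = S.σ 0 := by
  simpa [ψ, term] using (S.hasSum_χ_add 0).tsum_eq

theorem exists_mem_gap {v : ℝ} (hv0 : 0 ≤ v) (hv1 : v < S.σ 0) (hv : v ∉ range S.ψ) :
    ∃ w m, v ∈ Ioo (S.base w m + S.σ (m + 1)) (S.base w m + S.χ m) := by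
  have hle := ψ_digits_le (S := S) hv0
  rcases le_ψ_digits_or_eventually_true (S := S) v with h | ⟨n, hn⟩
  · exact absurd ⟨_, le_antisymm hle h⟩ hv
  have hfalse : ∃ j, S.digits v j = false := by
    by_contra! h
    have : S.digits v = fun _ => true := funext fun j => by simpa using h j
    rw [this, ψ_const_true] at hle
    linarith
  obtain ⟨m, hm⟩ := exists_isLowerGapEnd hn hfalse.choose_spec
  rw [ψ_of_isLowerGapEnd hm] at hle
  refine ⟨S.digits v, m, lt_of_le_of_ne hle fun h => hv ⟨lowerEnd (S.digits v) m, ?_⟩,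
    lt_base_add_χ_of_digits_eq_false hm.1⟩
  rw [ψ_lowerEnd, h]

theorem isNonporousAt_ψ (hγ : ∀ ε > 0, ∀ᶠ m in atTop, S.γ m ≤ ε * S.σ (m + 3))
    {d : ℕ → Bool} {N : ℕ} (hd : ∀ k, N ≤ k → d (k + 1) = !d k) :
    IsNonporousAt (range S.ψ) (S.ψ d) := by
  intro ε hε
  obtain ⟨M₀, hM₀⟩ := (hγ ε hε).exists_forall_of_atTop
  set M := max M₀ N
  refine Metric.eventually_nhds_iff.2 ⟨S.σ (M + 3), S.σ_pos _, fun v hv => ?_⟩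
  rw [Real.dist_eq] at hv
  by_cases hvP : v ∈ range S.ψ
  · exact ⟨v, hvP, by simpa using mul_nonneg hε.le dist_nonneg⟩
  have hσ : S.σ (M + 3) ≤ S.σ (N + 2) := S.σ_strictAnti.antitone (by omega)
  have hinner := ψ_mem_inner_cylinder (S := S) hd 0
  simp only [base, Finset.range_zero, Finset.sum_empty, zero_add, Nat.zero_max] at hinner
  obtain ⟨w, m, hvm⟩ := exists_mem_gap (S := S)
    (by linarith [neg_abs_le (v - S.ψ d)]) (by linarith [le_abs_self (v - S.ψ d)]) hvP
  have hsep := σ_le_abs_sub_ψ hd hvm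
  have hmM : M < m := by
    by_contra! h
    exact absurd (hsep.trans_lt hv) (not_lt.2 (S.σ_strictAnti.antitone (by omega)))
  rw [max_eq_left (by omega)] at hsep
  refine ⟨_, ⟨lowerEnd w m, rfl⟩, ?_⟩
  rw [ψ_lowerEnd, Real.dist_eq, Real.dist_eq, abs_of_pos (by linarith [hvm.1])]
  calc v - (S.base w m + S.σ (m + 1)) ≤ S.γ m := by linarith [hvm.2, S.σ_succ_add_γ m]
    _ ≤ ε * S.σ (m + 3) := hM₀ m (by omega)
    _ ≤ ε * |v - S.ψ d| := by gcongr

theorem accPt_ψ (d : ℕ → Bool) : AccPt (S.ψ d) (𝓟 (S.ψ '' eventuallyAlternating)) := by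
  refine accPt_iff_nhds.2 fun U hU => ?_
  obtain ⟨δ, hδ, hball⟩ := Metric.mem_nhds_iff.1 hU
  obtain ⟨n, hn⟩ := (S.tendsto_σ.eventually (gt_mem_nhds hδ)).exists
  let e : Bool → ℕ → Bool := fun b => altExt fun i : Fin (n + 1) => if (i : ℕ) < n then d i else b
  have he : ∀ b k, k < n → e b k = d k := fun b k hk => by
    simp [e, altExt, hk, hk.trans n.lt_succ_self]
  have hen : ∀ b, e b n = b := fun b => by simp [e, altExt]
  have hmem : ∀ b, S.ψ (e b) ∈ U ∩ S.ψ '' eventuallyAlternating := fun b =>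
    ⟨hball (by rw [mem_ball, Real.dist_eq]; exact (abs_ψ_sub_ψ_le (he b)).trans_lt hn),
      _, ⟨⟨n + 1, _⟩, rfl⟩, rfl⟩
  have hne : S.ψ (e false) ≠ S.ψ (e true) := fun h => by
    simpa [hen] using congrFun (ψ_injective h) n
  by_cases h : S.ψ (e false) = S.ψ d
  · exact ⟨_, hmem true, fun h' => hne (h.trans h'.symm)⟩
  · exact ⟨_, hmem false, h⟩

end CantorScale

section Euclidean

variable {ι : Type*}

def coordPi (ι : Type*) (D : Set ℝ) : Set (EuclideanSpace ℝ ι) := {x | ∀ i, x i ∈ D}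

theorem countable_coordPi [Finite ι] {D : Set ℝ} (hD : D.Countable) :
    (coordPi ι D).Countable :=
  (Set.countable_pi fun _ : ι => hD).preimage (PiLp.homeomorph 2 _).injective

theorem closure_coordPi (D : Set ℝ) : closure (coordPi ι D) = coordPi ι (closure D) := by
  have h : ∀ D : Set ℝ, coordPi ι D = PiLp.homeomorph 2 (fun _ : ι => ℝ) ⁻¹' univ.pi fun _ => D :=
    fun D => by ext x; simp [coordPi]; exact Iff.rfl
  rw [h, h, ← Homeomorph.preimage_closure, closure_pi_set]

theorem preperfect_coordPi [Fintype ι] [Nonempty ι] {D : Set ℝ} (hD : Preperfect D) :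
    Preperfect (coordPi ι D) := by
  classical
  intro x hx
  refine accPt_iff_nhds.2 fun U hU => ?_
  obtain ⟨r, hr, hball⟩ := Metric.mem_nhds_iff.1 hU
  obtain i₀ : ι := Classical.arbitrary ι
  obtain ⟨y, ⟨hyr, hyD⟩, hyx⟩ := accPt_iff_nhds.1 (hD _ (hx i₀)) _ (ball_mem_nhds _ hr)
  set x' : EuclideanSpace ℝ ι := x + (y - x i₀) • PiLp.single 2 i₀ (1 : ℝ)
  have hcoord : ∀ i, x' i = if i = i₀ then y else x i := by
    intro i; by_cases hi : i = i₀ <;> simp [x', hi]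
  refine ⟨x', ⟨hball ?_, fun i => ?_⟩, fun h => hyx ?_⟩
  · rwa [mem_ball, dist_eq_norm, add_sub_cancel_left, norm_smul, PiLp.norm_single, norm_one,
      mul_one, ← dist_eq_norm]
  · rw [hcoord]; split_ifs; exacts [hyD, hx i]
  · simpa [hcoord] using congrArg (· i₀) h

theorem isNonporousAt_coordPi [Fintype ι] {P : Set ℝ} {a : EuclideanSpace ℝ ι}
    (h : ∀ i, IsNonporousAt P (a i)) : IsNonporousAt (coordPi ι P) a := by
  intro ε hε
  have hcoord : ∀ i, ∀ᶠ v in 𝓝 a, ∃ p ∈ P, dist (v i) p ≤ ε * dist (v i) (a i) := fun i =>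
    ((PiLp.continuous_apply 2 _ i).tendsto a).eventually (h i ε hε)
  filter_upwards [eventually_all.2 hcoord] with v hv
  choose p hpP hp using hv
  refine ⟨WithLp.toLp 2 p, fun i => hpP i, ?_⟩
  rw [EuclideanSpace.dist_eq, EuclideanSpace.dist_eq, ← Real.sqrt_sq hε.le, ← Real.sqrt_mul
    (sq_nonneg ε), Finset.mul_sum]
  gcongr with i
  rw [← mul_pow]
  exact pow_le_pow_left₀ dist_nonneg (hp i) 2

def coordHomeomorph (ι : Type*) (φ : ℝ ≃ₜ ℝ) : EuclideanSpace ℝ ι ≃ₜ EuclideanSpace ℝ ι :=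
  (PiLp.homeomorph 2 _).trans
    ((Homeomorph.piCongrRight fun _ => φ).trans (PiLp.homeomorph 2 _).symm)

theorem image_coordHomeomorph_coordPi (φ : ℝ ≃ₜ ℝ) (D : Set ℝ) :
    coordHomeomorph ι φ '' coordPi ι D = coordPi ι (φ '' D) := by
  ext y
  constructor
  · rintro ⟨x, hx, rfl⟩ i
    exact ⟨x i, hx i, rfl⟩
  · intro hy
    refine ⟨(coordHomeomorph ι φ).symm y, fun i => ?_, by simp⟩
    obtain ⟨x, hx, hxy⟩ := hy i
    show φ.symm (y i) ∈ D
    rwa [← hxy, φ.symm_apply_apply]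

end Euclidean

namespace CantorScale

/-- The relative gap length `γ n / σ n = 1 / (n + 2)` tends to zero. -/
noncomputable def fat : CantorScale where
  σ n := 1 / (2 ^ n * (n + 1))
  σ_pos n := by positivity
  two_mul_σ_succ_lt n := by
    rw [pow_succ]
    field_simp
    push_cast
    linarith

/-- The middle-thirds Cantor set. -/
noncomputable def thin : CantorScale where
  σ n := (1 / 3) ^ n
  σ_pos n := by positivity
  two_mul_σ_succ_lt n := by
    rw [pow_succ]
    linarith [pow_pos (by norm_num : (0 : ℝ) < 1 / 3) n]

theorem fat_γ_le (m : ℕ) : fat.γ m ≤ 24 / (m + 1) * fat.σ (m + 3) := by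
  have hp : (0 : ℝ) < 2 ^ m := by positivity
  have hm : (0 : ℝ) ≤ m := m.cast_nonneg
  have hγ : fat.γ m = 1 / (2 ^ m * ((m + 1) * (m + 2))) := by
    simp only [γ, fat]; push_cast; field_simp; ring
  have hσ : 24 / (m + 1) * fat.σ (m + 3) = 3 / (2 ^ m * ((m + 1) * (m + 4))) := by
    simp only [fat]; push_cast; field_simp; ring
  rw [hγ, hσ, div_le_div_iff₀ (by positivity) (by positivity)]
  nlinarith [mul_pos hp (show (0 : ℝ) < m + 1 by linarith)]

theorem eventually_fat_γ_le {ε : ℝ} (hε : 0 < ε) : ∀ᶠ m in atTop, fat.γ m ≤ ε * fat.σ (m + 3) := by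
  obtain ⟨N, hN⟩ := exists_nat_gt (24 / ε)
  refine eventually_atTop.2 ⟨N, fun m hm => (fat_γ_le m).trans ?_⟩
  gcongr
  · exact (fat.σ_pos _).le
  rw [div_le_iff₀ (by positivity)]
  have : (N : ℝ) ≤ m := by exact_mod_cast hm
  rw [div_lt_iff₀ hε] at hN
  nlinarith

theorem thin_σ_le (n : ℕ) : thin.σ n ≤ 3 * thin.γ n := by
  simp only [γ, thin, pow_succ]
  linarith

end CantorScale

open CantorScale

theorem not_isConicalLimitSet_coordPi_fat (ι : Type*) [Fintype ι] [Nonempty ι] :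
    ¬ IsConicalLimitSet (coordPi ι (fat.ψ '' eventuallyAlternating)) := by
  set D := fat.ψ '' eventuallyAlternating
  have hD : Preperfect D := by
    rintro _ ⟨d, -, rfl⟩
    exact accPt_ψ d
  have hclosure : coordPi ι (range fat.ψ) ⊆ closure (coordPi ι D) := by
    rw [closure_coordPi]
    rintro x hx i
    obtain ⟨d, hd⟩ := hx i
    exact hd ▸ mem_closure_iff_clusterPt.2 (accPt_ψ d).clusterPt
  obtain ⟨x, hx⟩ : D.Nonempty := ⟨_, _, ⟨⟨0, Fin.elim0⟩, rfl⟩, rfl⟩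
  refine not_isConicalLimitSet_of_isNonporousAt
    (countable_coordPi (eventuallyAlternating_countable.image _))
    ⟨WithLp.toLp 2 fun _ => x, fun _ => hx⟩ (preperfect_coordPi hD)
    fun a ha => (isNonporousAt_coordPi fun i => ?_).mono hclosure
  obtain ⟨d, hd, hda⟩ := ha i
  obtain ⟨N, hN⟩ := exists_alternating_of_mem hd
  exact hda ▸ isNonporousAt_ψ (fun _ => eventually_fat_γ_le) hN

theorem isConicalLimitSet_coordPi_thin (ι : Type*) [Fintype ι] [Nonempty ι] :
    IsConicalLimitSet (coordPi ι (thin.ψ '' eventuallyAlternating)) := by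
  classical
  obtain i₀ : ι := Classical.arbitrary ι
  refine isConicalLimitSet_of_isConicalGapPoint (ℓ := EuclideanSpace.proj i₀)
    (u := PiLp.single 2 i₀ 1) (K := range thin.ψ) (by simp)
    (countable_coordPi (eventuallyAlternating_countable.image _)) fun b hb => ?_
  obtain ⟨e, -, he⟩ := hb i₀
  simpa [he] using isConicalGapPoint_ψ thin_σ_le e

/-- For every `m ≥ 1` there are a homeomorphism `h` of `ℝ^m` and a countable set
`A ⊆ ℝ^m` such that `A` is not a conical limit set but `h(A)` is. -/
theorem conicalLimitSets_not_topologically_invariant (m : ℕ) (hm : 1 ≤ m) :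
    ∃ h : EuclideanSpace ℝ (Fin m) ≃ₜ EuclideanSpace ℝ (Fin m),
      ∃ A : Set (EuclideanSpace ℝ (Fin m)), A.Countable ∧
        ¬ IsConicalLimitSet A ∧ IsConicalLimitSet (⇑h '' A) := by
  have : Nonempty (Fin m) := ⟨⟨0, hm⟩⟩
  refine ⟨coordHomeomorph (Fin m) (transferHomeomorph fat thin),
    coordPi (Fin m) (fat.ψ '' eventuallyAlternating),
    countable_coordPi (eventuallyAlternating_countable.image _),
    not_isConicalLimitSet_coordPi_fat (Fin m), ?_⟩
  rw [image_coordHomeomorph_coordPi, image_image]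
  simpa [transferHomeomorph_apply, transfer_ψ] using isConicalLimitSet_coordPi_thin (Fin m)
end

section
/- Let m ≥ 1, let X ⊆ ℝ^m, and let (U_i)_{i ∈ I} be a family of open subsets of ℝ^m with X ⊆ ⋃_{i ∈ I} U_i. Then X is a conical limit set if and only if X ∩ U_i is a conical limit set for every i ∈ I. -/
open Filter Topology

/-!
A conical sequence `(t_n, v_n) → (0, x)` satisfies `dist v_n x ≤ C t_n ≪ √t_n`, so it eventually
enters the parabolic region `{(t, v) | B(v, √t) ⊆ U}` over an open set `U` if `x ∈ U`, and
eventually avoids it if `x ∉ U`. Intersecting with this region therefore cuts a conical limit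
set down to `X ∩ U`. Conversely, well-order the cover and put a point of `E_i` into the glued set
only if `i` is the first index whose parabolic region contains it: a conical sequence converging
to `x` eventually does so exactly for the first `i` with `x ∈ U_i`, so only `E_i` contributes
conical limits at `x`.
-/

open Metric

namespace ConicalLimitSet

variable {V : Type*} [NormedAddCommGroup V]

structure IsConicalSeq (w : ℕ → ℝ × V) (x : V) (C : ℝ) : Prop where
  tendsto_fst : Tendsto (fun n => (w n).1) atTop (𝓝 0)
  tendsto_snd : Tendsto (fun n => (w n).2) atTop (𝓝 x)
  norm_sub_le : ∀ n, ‖(w n).2 - x‖ ≤ C * (w n).1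

theorem mem_conicalLimitSet_iff {E : Set (ℝ × V)} {x : V} :
    x ∈ conicalLimitSet E ↔ ∃ C > 0, ∃ w : ℕ → ℝ × V, (∀ n, w n ∈ E) ∧ IsConicalSeq w x C :=
  ⟨fun ⟨C, hC, w, hw, ht, hv, hb⟩ => ⟨C, hC, w, hw, ⟨ht, hv, hb⟩⟩,
    fun ⟨C, hC, w, hw, ⟨ht, hv, hb⟩⟩ => ⟨C, hC, w, hw, ht, hv, hb⟩⟩

theorem IsConicalSeq.mem_conicalLimitSet {E : Set (ℝ × V)} {w : ℕ → ℝ × V} {x : V} {C : ℝ}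
    (hw : IsConicalSeq w x C) (hC : 0 < C) (hE : ∃ᶠ n in atTop, w n ∈ E) :
    x ∈ conicalLimitSet E := by
  obtain ⟨φ, hφ, hφE⟩ := extraction_of_frequently_atTop hE
  exact mem_conicalLimitSet_iff.2 ⟨C, hC, w ∘ φ, hφE, hw.tendsto_fst.comp hφ.tendsto_atTop,
    hw.tendsto_snd.comp hφ.tendsto_atTop, fun n => hw.norm_sub_le (φ n)⟩

theorem conicalLimitSet_mono {E F : Set (ℝ × V)} (h : E ⊆ F) :
    conicalLimitSet E ⊆ conicalLimitSet F := by
  rintro x ⟨C, hC, w, hw, hrest⟩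
  exact ⟨C, hC, w, fun n => h (hw n), hrest⟩

variable (V) in
def parabolicRegion (U : Set V) : Set (ℝ × V) :=
  {p | ball p.2 (√p.1) ⊆ U}

theorem eventually_mem_parabolicRegion {α : Type*} {l : Filter α} {U : Set V} (hU : IsOpen U)
    {x : V} (hx : x ∈ U) {w : α → ℝ × V} (ht : Tendsto (fun n => (w n).1) l (𝓝 0))
    (hv : Tendsto (fun n => (w n).2) l (𝓝 x)) :
    ∀ᶠ n in l, w n ∈ parabolicRegion V U := by
  obtain ⟨ε, hε, hball⟩ := isOpen_iff.1 hU x hx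
  have hsqrt : Tendsto (fun n => √(w n).1) l (𝓝 0) :=
    (Real.continuous_sqrt.tendsto' 0 0 Real.sqrt_zero).comp ht
  filter_upwards [hsqrt.eventually (gt_mem_nhds (half_pos hε)),
    hv.eventually (ball_mem_nhds x (half_pos hε))] with n hsmall hclose
  exact (ball_subset_ball' (by linarith)).trans hball

theorem IsConicalSeq.eventually_mem_of_mem_parabolicRegion {w : ℕ → ℝ × V} {x : V} {C : ℝ}
    (hw : IsConicalSeq w x C) (hpos : ∀ n, 0 < (w n).1) :
    ∀ᶠ n in atTop, ∀ U, w n ∈ parabolicRegion V U → x ∈ U := by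
  have hsqrt : Tendsto (fun n => C * √(w n).1) atTop (𝓝 0) := by
    simpa using ((Real.continuous_sqrt.tendsto 0).comp hw.tendsto_fst).const_mul C
  filter_upwards [hsqrt.eventually (gt_mem_nhds one_pos)] with n hsmall U hU
  apply hU
  have hs : 0 < √(w n).1 := Real.sqrt_pos.2 (hpos n)
  calc dist x (w n).2 = ‖(w n).2 - x‖ := dist_comm _ _ |>.trans (dist_eq_norm _ _)
    _ ≤ C * (w n).1 := hw.norm_sub_le n
    _ = C * √(w n).1 * √(w n).1 := by rw [mul_assoc, Real.mul_self_sqrt (hpos n).le]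
    _ < √(w n).1 := by nlinarith

theorem conicalLimitSet_inter_parabolicRegion {E : Set (ℝ × V)} (hE : E ⊆ upperHalf V)
    {U : Set V} (hU : IsOpen U) :
    conicalLimitSet (E ∩ parabolicRegion V U) = conicalLimitSet E ∩ U := by
  ext x
  constructor
  · intro hx
    refine ⟨conicalLimitSet_mono Set.inter_subset_left hx, ?_⟩
    obtain ⟨C, -, w, hw, hseq⟩ := mem_conicalLimitSet_iff.1 hx
    obtain ⟨n, hn⟩ := (hseq.eventually_mem_of_mem_parabolicRegion fun n => hE (hw n).1).exists
    exact hn U (hw n).2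
  · rintro ⟨hx, hxU⟩
    obtain ⟨C, hC, w, hw, hseq⟩ := mem_conicalLimitSet_iff.1 hx
    refine hseq.mem_conicalLimitSet hC (Eventually.frequently ?_)
    filter_upwards [eventually_mem_parabolicRegion hU hxU hseq.tendsto_fst hseq.tendsto_snd]
      with n hn using ⟨hw n, hn⟩

section

def firstParabolicRegion {ι : Type*} [LT ι] (U : ι → Set V) (i : ι) : Set (ℝ × V) :=
  parabolicRegion V (U i) \ ⋃ j < i, parabolicRegion V (U j)

variable {ι : Type*} [LinearOrder ι]

theorem exists_first_mem [WellFoundedLT ι] {β : Type*} {U : ι → Set β} {x : β}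
    (hx : x ∈ ⋃ i, U i) :
    ∃ j, x ∈ U j ∧ ∀ i < j, x ∉ U i := by
  obtain ⟨j, hj, hmin⟩ := wellFounded_lt.has_min {i | x ∈ U i} (Set.mem_iUnion.1 hx)
  exact ⟨j, hj, fun i hi hxi => hmin i hxi hi⟩

theorem IsConicalSeq.eventually_mem_firstParabolicRegion_iff {U : ι → Set V}
    (hU : ∀ i, IsOpen (U i)) {w : ℕ → ℝ × V} {x : V} {C : ℝ} (hw : IsConicalSeq w x C)
    (hpos : ∀ n, 0 < (w n).1) {j : ι} (hxj : x ∈ U j) (hfirst : ∀ i < j, x ∉ U i) :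
    ∀ᶠ n in atTop, ∀ i, w n ∈ firstParabolicRegion U i ↔ i = j := by
  filter_upwards [eventually_mem_parabolicRegion (hU j) hxj hw.tendsto_fst hw.tendsto_snd,
    hw.eventually_mem_of_mem_parabolicRegion hpos] with n hj hmem i
  constructor
  · rintro ⟨hi, hnot⟩
    rcases lt_trichotomy i j with hij | rfl | hji
    · exact absurd (hmem _ hi) (hfirst i hij)
    · rfl
    · exact absurd (Set.mem_iUnion₂.2 ⟨j, hji, hj⟩) hnot
  · rintro rfl
    refine ⟨hj, fun hlt => ?_⟩
    obtain ⟨k, hk, hwk⟩ := Set.mem_iUnion₂.1 hlt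
    exact hfirst k hk (hmem _ hwk)

theorem conicalLimitSet_iUnion_inter_firstParabolicRegion [WellFoundedLT ι] {X : Set V}
    {U : ι → Set V} (hU : ∀ i, IsOpen (U i)) (hX : X ⊆ ⋃ i, U i) {E : ι → Set (ℝ × V)}
    (hE : ∀ i, E i ⊆ upperHalf V) (hEX : ∀ i, conicalLimitSet (E i) = X ∩ U i) :
    conicalLimitSet (⋃ i, E i ∩ firstParabolicRegion U i) = X := by
  ext x
  constructor
  · intro hx
    obtain ⟨C, hC, w, hw, hseq⟩ := mem_conicalLimitSet_iff.1 hx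
    choose idx hidx using fun n => Set.mem_iUnion.1 (hw n)
    have hpos n : 0 < (w n).1 := hE _ (hidx n).1
    obtain ⟨n, hn⟩ := (hseq.eventually_mem_of_mem_parabolicRegion hpos).exists
    obtain ⟨j, hxj, hfirst⟩ := exists_first_mem (Set.mem_iUnion.2 ⟨_, hn _ (hidx n).2.1⟩)
    have hxE : x ∈ conicalLimitSet (E j) := by
      refine hseq.mem_conicalLimitSet hC (Eventually.frequently ?_)
      filter_upwards [hseq.eventually_mem_firstParabolicRegion_iff hU hpos hxj hfirst]
        with n hn
      exact (hn _).1 (hidx n).2 ▸ (hidx n).1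
    exact (hEX j ▸ hxE).1
  · intro hx
    obtain ⟨j, hxj, hfirst⟩ := exists_first_mem (hX hx)
    have hxE : x ∈ conicalLimitSet (E j) := hEX j ▸ ⟨hx, hxj⟩
    obtain ⟨C, hC, w, hw, hseq⟩ := mem_conicalLimitSet_iff.1 hxE
    refine hseq.mem_conicalLimitSet hC (Eventually.frequently ?_)
    filter_upwards [hseq.eventually_mem_firstParabolicRegion_iff hU (fun n => hE j (hw n)) hxj
      hfirst] with n hn
    exact Set.mem_iUnion.2 ⟨j, hw n, (hn j).2 rfl⟩

end

end ConicalLimitSet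

open ConicalLimitSet in
theorem isConicalLimitSet_iff_locally_general (m : ℕ) {I : Type*}
    (X : Set (EuclideanSpace ℝ (Fin m))) (U : I → Set (EuclideanSpace ℝ (Fin m)))
    (hU : ∀ i, IsOpen (U i)) (hcov : X ⊆ ⋃ i, U i) :
    IsConicalLimitSet X ↔ ∀ i, IsConicalLimitSet (X ∩ U i) := by
  constructor
  · rintro ⟨E, hE, rfl⟩ i
    exact ⟨E ∩ parabolicRegion _ (U i), Set.inter_subset_left.trans hE,
      conicalLimitSet_inter_parabolicRegion hE (hU i)⟩
  · intro h
    choose E hE hEX using h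
    obtain ⟨_, _⟩ := exists_wellFoundedLT I
    exact ⟨⋃ i, E i ∩ firstParabolicRegion U i,
      Set.iUnion_subset fun i => Set.inter_subset_left.trans (hE i),
      conicalLimitSet_iUnion_inter_firstParabolicRegion hU hcov hE hEX⟩

/-- Being a conical limit set is a local property: if `{U i}` is a cover of `X` by open
subsets of `ℝ^m`, then `X` is a conical limit set iff each `X ∩ U i` is. -/
theorem isConicalLimitSet_iff_locally (m : ℕ) (hm : 1 ≤ m) {I : Type*}
    (X : Set (EuclideanSpace ℝ (Fin m))) (U : I → Set (EuclideanSpace ℝ (Fin m)))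
    (hU : ∀ i, IsOpen (U i)) (hcov : X ⊆ ⋃ i, U i) :
    IsConicalLimitSet X ↔ ∀ i, IsConicalLimitSet (X ∩ U i) :=
  isConicalLimitSet_iff_locally_general m X U hU hcov
end

section
/- Let f : ℝ → ℝ be a homeomorphism and let M ≥ 1 be a constant such that for all x ∈ ℝ and all t > 0 one has 1/M ≤ |f(x + t) − f(x)| / |f(x) − f(x − t)| ≤ M (an M-quasisymmetric homeomorphism of ℝ). If X ⊆ ℝ is a conical limit set, then the image f(X) is a conical limit set. -/
open Filter Topology

set_option maxHeartbeats 2000000 in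
/-- The image of a conical limit set in `ℝ` under an `M`-quasisymmetric homeomorphism of
`ℝ` is again a conical limit set. -/
theorem quasisymmetric_image_conicalLimitSet (f : ℝ → ℝ) (hf : IsHomeomorph f)
    (M : ℝ) (hM : 1 ≤ M)
    (hqs : ∀ x : ℝ, ∀ t : ℝ, 0 < t →
      1 / M ≤ |f (x + t) - f x| / |f x - f (x - t)| ∧
      |f (x + t) - f x| / |f x - f (x - t)| ≤ M)
    (X : Set ℝ) (hX : IsConicalLimitSet X) :
    IsConicalLimitSet (f '' X) := by
  obtain ⟨E, hE, hEX⟩ := hX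
  have hM0 : (0:ℝ) < M := lt_of_lt_of_le one_pos hM
  have hinj : Function.Injective f := hf.injective
  have hpos : ∀ a b : ℝ, a < b → 0 < |f b - f a| := by
    intro a b h
    rw [abs_pos, sub_ne_zero]
    exact fun e => h.ne' (hinj e)
  have habs : ∀ a b c : ℝ, a ≤ b → b ≤ c → |f c - f a| = |f c - f b| + |f b - f a| := by
    rcases hf.continuous.strictMono_of_inj hinj with hm | hm
    · intro a b c hab hbc
      rw [abs_of_nonneg (sub_nonneg.2 (hm.monotone (hab.trans hbc))),
          abs_of_nonneg (sub_nonneg.2 (hm.monotone hbc)),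
          abs_of_nonneg (sub_nonneg.2 (hm.monotone hab))]
      ring
    · intro a b c hab hbc
      rw [abs_of_nonpos (sub_nonpos.2 (hm.antitone (hab.trans hbc))),
          abs_of_nonpos (sub_nonpos.2 (hm.antitone hbc)),
          abs_of_nonpos (sub_nonpos.2 (hm.antitone hab))]
      ring
  -- basic quasisymmetry inequalities
  have hup : ∀ x t : ℝ, 0 < t → |f (x + t) - f x| ≤ M * |f x - f (x - t)| := by
    intro x t ht
    have hd : 0 < |f x - f (x - t)| := hpos (x - t) x (by linarith)
    have h := (hqs x t ht).2
    rw [div_le_iff₀ hd] at h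
    linarith
  have hlow : ∀ x t : ℝ, 0 < t → |f x - f (x - t)| ≤ M * |f (x + t) - f x| := by
    intro x t ht
    have hd : 0 < |f x - f (x - t)| := hpos (x - t) x (by linarith)
    have h := (hqs x t ht).1
    rw [le_div_iff₀ hd] at h
    have h2 := mul_le_mul_of_nonneg_left h hM0.le
    have e : M * (1 / M * |f x - f (x - t)|) = |f x - f (x - t)| := by
      field_simp
    rw [e] at h2
    exact h2
  -- iterated single-interval bounds
  have hR : ∀ x t : ℝ, 0 < t → ∀ k : ℕ,
      |f (x + k * t + t) - f (x + k * t)| ≤ M ^ k * |f (x + t) - f x| := by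
    intro x t ht k
    induction k with
    | zero => simp
    | succ k ih =>
      push_cast
      push_cast at ih
      have e1 : x + ((k:ℝ) + 1) * t - t = x + (k:ℝ) * t := by ring
      have h2 : |f (x + ((k:ℝ) + 1) * t) - f (x + (k:ℝ) * t)| ≤ M ^ k * |f (x + t) - f x| := by
        have e2 : x + ((k:ℝ) + 1) * t = x + (k:ℝ) * t + t := by ring
        rw [e2]; exact ih
      calc |f (x + ((k:ℝ) + 1) * t + t) - f (x + ((k:ℝ) + 1) * t)|
          ≤ M * |f (x + ((k:ℝ) + 1) * t) - f (x + ((k:ℝ) + 1) * t - t)| := hup _ t ht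
        _ = M * |f (x + ((k:ℝ) + 1) * t) - f (x + (k:ℝ) * t)| := by rw [e1]
        _ ≤ M * (M ^ k * |f (x + t) - f x|) := mul_le_mul_of_nonneg_left h2 hM0.le
        _ = M ^ (k + 1) * |f (x + t) - f x| := by ring
  have hL : ∀ x t : ℝ, 0 < t → ∀ k : ℕ,
      |f (x - k * t) - f (x - k * t - t)| ≤ M ^ k * |f x - f (x - t)| := by
    intro x t ht k
    induction k with
    | zero => simp
    | succ k ih =>
      push_cast
      push_cast at ih
      have e1 : x - ((k:ℝ) + 1) * t + t = x - (k:ℝ) * t := by ring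
      have h := hlow (x - ((k:ℝ) + 1) * t) t ht
      rw [e1] at h
      have e2 : x - (k:ℝ) * t - t = x - ((k:ℝ) + 1) * t := by ring
      rw [e2] at ih
      calc |f (x - ((k:ℝ) + 1) * t) - f (x - ((k:ℝ) + 1) * t - t)|
          ≤ M * |f (x - (k:ℝ) * t) - f (x - ((k:ℝ) + 1) * t)| := h
        _ ≤ M * (M ^ k * |f x - f (x - t)|) := by
            apply mul_le_mul_of_nonneg_left _ hM0.le
            calc |f (x - (k:ℝ) * t) - f (x - ((k:ℝ) + 1) * t)|
                = |f (x - (k:ℝ) * t) - f (x - (k:ℝ) * t - t)| := by rw [e2]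
              _ ≤ M ^ k * |f x - f (x - t)| := by
                  have e3 : x - (k:ℝ) * t - t = x - ((k:ℝ) + 1) * t := by ring
                  rw [e3]; exact ih
        _ = M ^ (k + 1) * |f x - f (x - t)| := by ring
  -- chain bounds
  have hCR : ∀ x t : ℝ, 0 < t → ∀ k : ℕ,
      |f (x + k * t) - f x| ≤ (k * M ^ k) * |f (x + t) - f x| := by
    intro x t ht k
    induction k with
    | zero => simp
    | succ k ih =>
      push_cast
      push_cast at ih
      have habs0 : (0:ℝ) ≤ |f (x + t) - f x| := abs_nonneg _
      have hMk : M ^ k ≤ M ^ (k + 1) := pow_le_pow_right₀ (by linarith) (by omega)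
      have h1 := hR x t ht k
      have e1 : x + ((k:ℝ) + 1) * t = x + (k:ℝ) * t + t := by ring
      have hk0 : (0:ℝ) ≤ (k:ℝ) := Nat.cast_nonneg k
      have hMp : (0:ℝ) < M ^ k := pow_pos hM0 k
      calc |f (x + ((k:ℝ) + 1) * t) - f x|
          ≤ |f (x + ((k:ℝ) + 1) * t) - f (x + (k:ℝ) * t)| + |f (x + (k:ℝ) * t) - f x| :=
            abs_sub_le _ _ _
        _ = |f (x + (k:ℝ) * t + t) - f (x + (k:ℝ) * t)| + |f (x + (k:ℝ) * t) - f x| := by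
            rw [e1]
        _ ≤ M ^ k * |f (x + t) - f x| + (k:ℝ) * M ^ k * |f (x + t) - f x| :=
            add_le_add h1 ih
        _ = ((k:ℝ) + 1) * M ^ k * |f (x + t) - f x| := by ring
        _ ≤ ((k:ℝ) + 1) * M ^ (k + 1) * |f (x + t) - f x| := by
            gcongr
  have hCL : ∀ x t : ℝ, 0 < t → ∀ k : ℕ,
      |f x - f (x - k * t)| ≤ (k * M ^ k) * |f x - f (x - t)| := by
    intro x t ht k
    induction k with
    | zero => simp
    | succ k ih =>
      push_cast
      push_cast at ih
      have h1 := hL x t ht k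
      have e1 : x - ((k:ℝ) + 1) * t = x - (k:ℝ) * t - t := by ring
      have hMk : M ^ k ≤ M ^ (k + 1) := pow_le_pow_right₀ (by linarith) (by omega)
      have htri : |f x - f (x - ((k:ℝ) + 1) * t)|
          ≤ |f x - f (x - (k:ℝ) * t)| + |f (x - (k:ℝ) * t) - f (x - ((k:ℝ) + 1) * t)| := by
        have := abs_sub_le (f x) (f (x - (k:ℝ) * t)) (f (x - ((k:ℝ) + 1) * t))
        exact this
      calc |f x - f (x - ((k:ℝ) + 1) * t)|
          ≤ |f x - f (x - (k:ℝ) * t)| + |f (x - (k:ℝ) * t) - f (x - ((k:ℝ) + 1) * t)| := htri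
        _ ≤ (k:ℝ) * M ^ k * |f x - f (x - t)| + M ^ k * |f x - f (x - t)| := by
            rw [e1]
            gcongr
        _ = ((k:ℝ) + 1) * M ^ k * |f x - f (x - t)| := by ring
        _ ≤ ((k:ℝ) + 1) * M ^ (k + 1) * |f x - f (x - t)| := by
            have : (0:ℝ) ≤ (k:ℝ) + 1 := by positivity
            gcongr
  -- growth bounds
  have hG : ∀ x t : ℝ, 0 < t → ∀ m : ℕ,
      (1 + 1 / M) ^ m * |f (x + t) - f x| ≤ |f (x + 2 ^ m * t) - f x| := by
    intro x t ht m
    induction m with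
    | zero => simp
    | succ m ih =>
      have hs0 : (0:ℝ) < 2 ^ m * t := by positivity
      set s : ℝ := 2 ^ m * t with hs
      have h1 := hlow (x + s) s hs0
      have e2 : x + s - s = x := by ring
      rw [e2] at h1
      have h3 := habs x (x + s) (x + s + s) (by linarith) (by linarith)
      have e : x + 2 ^ (m + 1) * t = x + s + s := by rw [hs]; ring
      rw [e, h3, pow_succ]
      have h4 : 1 / M * |f (x + s) - f x| ≤ |f (x + s + s) - f (x + s)| := by
        rw [one_div, inv_mul_le_iff₀ hM0]
        linarith
      have hP : (0:ℝ) ≤ (1 + 1 / M) ^ m := by positivity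
      have t2 : 1 / M * ((1 + 1 / M) ^ m * |f (x + t) - f x|) ≤ 1 / M * |f (x + s) - f x| :=
        mul_le_mul_of_nonneg_left ih (by positivity)
      nlinarith [ih, t2, h4]
  have hGL : ∀ x t : ℝ, 0 < t → ∀ m : ℕ,
      (1 + 1 / M) ^ m * |f x - f (x - t)| ≤ |f x - f (x - 2 ^ m * t)| := by
    intro x t ht m
    induction m with
    | zero => simp
    | succ m ih =>
      have hs0 : (0:ℝ) < 2 ^ m * t := by positivity
      set s : ℝ := 2 ^ m * t with hs
      have h1 := hup (x - s) s hs0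
      have e2 : x - s + s = x := by ring
      rw [e2] at h1
      have h3 := habs (x - s - s) (x - s) x (by linarith) (by linarith)
      have e : x - 2 ^ (m + 1) * t = x - s - s := by rw [hs]; ring
      rw [e, h3, pow_succ]
      have h4 : 1 / M * |f x - f (x - s)| ≤ |f (x - s) - f (x - s - s)| := by
        rw [one_div, inv_mul_le_iff₀ hM0]
        linarith
      have t2 : 1 / M * ((1 + 1 / M) ^ m * |f x - f (x - t)|) ≤ 1 / M * |f x - f (x - s)| :=
        mul_le_mul_of_nonneg_left ih (by positivity)
      nlinarith [ih, t2, h4]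
  -- nested monotone comparison
  have hnest : ∀ a b c d : ℝ, a ≤ b → b ≤ c → c ≤ d → |f c - f b| ≤ |f d - f a| := by
    intro a b c d h1 h2 h3
    have e1 := habs a b c h1 h2
    have e2 := habs a c d (h1.trans h2) h3
    linarith [abs_nonneg (f b - f a), abs_nonneg (f d - f c)]
  -- the new set
  refine ⟨(fun p : ℝ × ℝ => (|f (p.2 + p.1) - f (p.2 - p.1)|, f p.2)) '' E, ?_, ?_⟩
  · rintro _ ⟨p, hp, rfl⟩
    have hp1 : 0 < p.1 := hE hp
    exact hpos (p.2 - p.1) (p.2 + p.1) (by linarith)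
  · ext y
    constructor
    · -- backward: y is a conical limit point of the image set ⇒ y ∈ f '' X
      intro hy
      obtain ⟨C, hC, w, hwE, hta, hva, hbd⟩ := hy
      have hch : ∀ n, ∃ p, p ∈ E ∧ (|f (p.2 + p.1) - f (p.2 - p.1)|, f p.2) = w n := by
        intro n
        obtain ⟨p, hp, he⟩ := hwE n
        exact ⟨p, hp, he⟩
      choose p hpE hpe using hch
      have ht : ∀ n, 0 < (p n).1 := fun n => hE (hpE n)
      have hs1 : ∀ n, (w n).1 = |f ((p n).2 + (p n).1) - f ((p n).2 - (p n).1)| := by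
        intro n; rw [← hpe n]
      have hs2 : ∀ n, (w n).2 = f ((p n).2) := by
        intro n; rw [← hpe n]
      obtain ⟨x, hfx⟩ := hf.surjective y
      have hfva : Tendsto (fun n => f ((p n).2)) atTop (𝓝 (f x)) := by
        rw [hfx]
        refine hva.congr ?_
        intro n; rw [hs2 n]
      set h : ℝ ≃ₜ ℝ := IsHomeomorph.homeomorph f hf with hh
      have hcoe : ∀ z : ℝ, h z = f z := fun z => rfl
      have hvx : Tendsto (fun n => (p n).2) atTop (𝓝 x) := by
        have h2 : Tendsto (fun n => h.symm (f ((p n).2))) atTop (𝓝 (h.symm (f x))) :=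
          (h.symm.continuous.tendsto (f x)).comp hfva
        have h3 : ∀ z : ℝ, h.symm (f z) = z := by
          intro z
          rw [← hcoe z, Homeomorph.symm_apply_apply]
        simpa [h3] using h2
      -- t_n → 0
      have htx : Tendsto (fun n => (p n).1) atTop (𝓝 (0:ℝ)) := by
        rw [Metric.tendsto_atTop]
        intro δ hδ
        have hc : 0 < |f (x + δ / 2) - f (x - δ / 2)| := hpos _ _ (by linarith)
        have h1 : ∀ᶠ n in atTop, (w n).1 < |f (x + δ / 2) - f (x - δ / 2)| :=
          hta.eventually_lt_const hc
        have h2 : ∀ᶠ n in atTop, |(p n).2 - x| < δ / 2 := by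
          have := hvx
          rw [Metric.tendsto_atTop] at this
          obtain ⟨N, hN⟩ := this (δ / 2) (by linarith)
          refine eventually_atTop.2 ⟨N, fun n hn => ?_⟩
          have := hN n hn
          rwa [Real.dist_eq] at this
        obtain ⟨N, hN⟩ := eventually_atTop.1 (h1.and h2)
        refine ⟨N, fun n hn => ?_⟩
        obtain ⟨hn1, hn2⟩ := hN n hn
        rw [Real.dist_eq, sub_zero, abs_of_pos (ht n)]
        by_contra hcon
        push_neg at hcon
        have hb1 : (p n).2 - (p n).1 ≤ x - δ / 2 := by
          have := abs_lt.1 hn2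
          linarith [this.1, this.2]
        have hb2 : x + δ / 2 ≤ (p n).2 + (p n).1 := by
          have := abs_lt.1 hn2
          linarith [this.1, this.2]
        have := hnest ((p n).2 - (p n).1) (x - δ / 2) (x + δ / 2) ((p n).2 + (p n).1)
          hb1 (by linarith) hb2
        rw [← hs1 n] at this
        linarith
      -- the cone condition
      obtain ⟨m, hm⟩ := pow_unbounded_of_one_lt (C * (1 + M))
        (show (1:ℝ) < 1 + 1 / M by
          have : (0:ℝ) < 1 / M := by positivity
          linarith)
      have hbnd : ∀ n, |(p n).2 - x| ≤ 2 ^ m * (p n).1 := by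
        intro n
        set tn := (p n).1 with htn
        set vn := (p n).2 with hvn
        by_contra hcon
        push_neg at hcon
        have htn0 : 0 < tn := htn ▸ ht n
        have h2m : (0:ℝ) < 2 ^ m := by positivity
        have hs0 : 0 < (w n).1 := by
          rw [hs1 n]
          exact hpos _ _ (by nlinarith [htn0])
        have hsplit := habs (vn - tn) vn (vn + tn) (by linarith [htn0]) (by linarith [htn0])
        have hbdn : |f vn - f x| ≤ C * (w n).1 := by
          have := hbd n
          rw [Real.norm_eq_abs, hs2 n, ← hfx] at this
          exact this
        have hP : (0:ℝ) < (1 + 1 / M) ^ m := by positivity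
        have hc4 : (C * (1 + M)) * (w n).1 < (1 + 1 / M) ^ m * (w n).1 :=
          mul_lt_mul_of_pos_right hm hs0
        rcases le_or_gt x vn with hxv | hxv
        · -- x below vn
          have hlt : x < vn - 2 ^ m * tn := by
            rw [abs_of_nonneg (by linarith)] at hcon
            linarith
          have g1 := hGL vn tn htn0 m
          have g2 : |f vn - f (vn - 2 ^ m * tn)| ≤ |f vn - f x| := by
            have e := habs x (vn - 2 ^ m * tn) vn hlt.le (by nlinarith [htn0, h2m])
            linarith [abs_nonneg (f (vn - 2 ^ m * tn) - f x)]
          have g3 : (w n).1 ≤ (1 + M) * |f vn - f (vn - tn)| := by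
            have hu := hup vn tn htn0
            rw [hs1 n, ← htn, ← hvn, hsplit]
            linarith
          have c1 : (1 + 1 / M) ^ m * (w n).1
              ≤ (1 + 1 / M) ^ m * ((1 + M) * |f vn - f (vn - tn)|) :=
            mul_le_mul_of_nonneg_left g3 hP.le
          have c2 : (1 + 1 / M) ^ m * |f vn - f (vn - tn)| ≤ C * (w n).1 :=
            le_trans (g1.trans g2) hbdn
          have c3 : (1 + M) * ((1 + 1 / M) ^ m * |f vn - f (vn - tn)|)
              ≤ (1 + M) * (C * (w n).1) :=
            mul_le_mul_of_nonneg_left c2 (by linarith)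
          nlinarith [c1, c3, hc4]
        · -- x above vn
          have hlt : vn + 2 ^ m * tn < x := by
            rw [abs_of_nonpos (by linarith)] at hcon
            linarith
          have g1 := hG vn tn htn0 m
          have g2 : |f (vn + 2 ^ m * tn) - f vn| ≤ |f x - f vn| := by
            have e := habs vn (vn + 2 ^ m * tn) x (by nlinarith [htn0, h2m]) hlt.le
            linarith [abs_nonneg (f x - f (vn + 2 ^ m * tn))]
          have g3 : (w n).1 ≤ (1 + M) * |f (vn + tn) - f vn| := by
            have hu := hlow vn tn htn0
            rw [hs1 n, ← htn, ← hvn, hsplit]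
            linarith
          have c1 : (1 + 1 / M) ^ m * (w n).1
              ≤ (1 + 1 / M) ^ m * ((1 + M) * |f (vn + tn) - f vn|) :=
            mul_le_mul_of_nonneg_left g3 hP.le
          have c2 : (1 + 1 / M) ^ m * |f (vn + tn) - f vn| ≤ C * (w n).1 := by
            refine le_trans (g1.trans g2) ?_
            rw [abs_sub_comm]
            exact hbdn
          have c3 : (1 + M) * ((1 + 1 / M) ^ m * |f (vn + tn) - f vn|)
              ≤ (1 + M) * (C * (w n).1) :=
            mul_le_mul_of_nonneg_left c2 (by linarith)
          nlinarith [c1, c3, hc4]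
      refine ⟨x, ?_, hfx⟩
      rw [← hEX]
      refine ⟨2 ^ m, by positivity, p, hpE, htx, hvx, fun n => ?_⟩
      rw [Real.norm_eq_abs]
      exact hbnd n
    · -- forward: x ∈ X ⇒ f x is a conical limit point of the image set
      rintro ⟨x, hxX, rfl⟩
      rw [← hEX] at hxX
      obtain ⟨C, hC, w, hwE, ht0, hv, hbd⟩ := hxX
      set k := ⌈C⌉₊ with hk
      have hk1 : 1 ≤ k := Nat.one_le_ceil_iff.2 hC
      have hk0 : (0:ℝ) < (k:ℝ) := by exact_mod_cast hk1
      refine ⟨(k:ℝ) * M ^ k, mul_pos hk0 (pow_pos hM0 k),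
        fun n => (|f ((w n).2 + (w n).1) - f ((w n).2 - (w n).1)|, f (w n).2),
        fun n => ⟨w n, hwE n, rfl⟩, ?_, ?_, ?_⟩
      · have hvt : Tendsto (fun n => (w n).2 + (w n).1) atTop (𝓝 x) := by
          have := hv.add ht0; simpa using this
        have hvt' : Tendsto (fun n => (w n).2 - (w n).1) atTop (𝓝 x) := by
          have := hv.sub ht0; simpa using this
        have h1 : Tendsto (fun n => f ((w n).2 + (w n).1) - f ((w n).2 - (w n).1))
            atTop (𝓝 0) := by
          have := ((hf.continuous.tendsto x).comp hvt).sub ((hf.continuous.tendsto x).comp hvt')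
          simpa using this
        simpa using h1.abs
      · exact (hf.continuous.tendsto x).comp hv
      · intro n
        set tn := (w n).1 with htn
        set vn := (w n).2 with hvn
        have ht : 0 < tn := hE (hwE n)
        have hbdn := hbd n
        rw [Real.norm_eq_abs] at hbdn
        rw [Real.norm_eq_abs]
        have hvx : |vn - x| ≤ (k:ℝ) * tn := by
          refine hbdn.trans ?_
          have : C ≤ (k:ℝ) := Nat.le_ceil C
          nlinarith
        have hsplit := habs (vn - tn) vn (vn + tn) (by linarith) (by linarith)
        have hnn : (0:ℝ) ≤ |f (vn + tn) - f (vn - tn)| := abs_nonneg _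
        rcases le_total x vn with hxv | hxv
        · have hxlo : vn - (k:ℝ) * tn ≤ x := by
            have := abs_le.1 hvx
            linarith [this.1, this.2]
          have h2 : |f vn - f x| ≤ |f vn - f (vn - (k:ℝ) * tn)| := by
            have e := habs (vn - (k:ℝ) * tn) x vn hxlo hxv
            linarith [abs_nonneg (f x - f (vn - (k:ℝ) * tn))]
          have h3 := hCL vn tn ht k
          have h4 : |f vn - f (vn - tn)| ≤ |f (vn + tn) - f (vn - tn)| := by
            rw [hsplit]
            linarith [abs_nonneg (f (vn + tn) - f vn)]
          calc |f vn - f x| ≤ |f vn - f (vn - (k:ℝ) * tn)| := h2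
            _ ≤ ((k:ℝ) * M ^ k) * |f vn - f (vn - tn)| := h3
            _ ≤ ((k:ℝ) * M ^ k) * |f (vn + tn) - f (vn - tn)| := by
                apply mul_le_mul_of_nonneg_left h4
                positivity
        · have hxhi : x ≤ vn + (k:ℝ) * tn := by
            have := abs_le.1 hvx
            linarith [this.1, this.2]
          have h2 : |f vn - f x| ≤ |f (vn + (k:ℝ) * tn) - f vn| := by
            have e := habs vn x (vn + (k:ℝ) * tn) hxv hxhi
            rw [abs_sub_comm]
            linarith [abs_nonneg (f (vn + (k:ℝ) * tn) - f x)]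
          have h3 := hCR vn tn ht k
          have h4 : |f (vn + tn) - f vn| ≤ |f (vn + tn) - f (vn - tn)| := by
            rw [hsplit]
            linarith [abs_nonneg (f vn - f (vn - tn))]
          calc |f vn - f x| ≤ |f (vn + (k:ℝ) * tn) - f vn| := h2
            _ ≤ ((k:ℝ) * M ^ k) * |f (vn + tn) - f vn| := h3
            _ ≤ ((k:ℝ) * M ^ k) * |f (vn + tn) - f (vn - tn)| := by
                apply mul_le_mul_of_nonneg_left h4
                positivity
end
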